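/- arXiv:2507.00939 — 6 statements merged into one kernel-verified Lean document; each statement's English description precedes it below -/
import Mathlib

section
/- Let the sequences (x_k), (y_k), (z_k) be generated by the monotone accelerated proximal gradient method M-APM: z_k = prox_{sg}(x_k - s∇f(x_k)); y_{k+1} = z_k if F(z_k) ≤ F(y_k), otherwise y_{k+1} = y_k; x_{k+1} = y_{k+1} + (k/(k+α))(y_{k+1} - y_k) + ((k+α-1)/(k+α))(z_k - y_{k+1}). Then, with G_s(x_k) = (x_k - z_k)/s, the identity (k+1)(x_{k+1} - y_{k+1}) - k(x_k - y_k) + (α-1)(x_{k+1} - x_k) = -(k+α-1) s G_s(x_k) holds for all k ≥ 0. -/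
/-- The inertial-iterates identity (3) for M-APM. -/
theorem mapm_inertial_identity
    {H : Type*} [NormedAddCommGroup H] [InnerProductSpace ℝ H] [CompleteSpace H]
    (f : H → ℝ) (f' : H → H) (g : H → ℝ) (s α : ℝ)
    (hα : 0 < α) (hs : 0 < s)
    (hdiff : ∀ x, HasGradientAt f (f' x) x)
    (hg : ConvexOn ℝ Set.univ g) (hg_lsc : LowerSemicontinuous g)
    (prox : H → H)
    (hprox : ∀ w, IsMinOn (fun u => g u + 1 / (2 * s) * ‖u - w‖ ^ 2) Set.univ (prox w))
    (F : H → ℝ) (hF : ∀ w, F w = f w + g w)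
    (Gs : H → H) (hGs : ∀ w, Gs w = (1 / s) • (w - prox (w - s • f' w)))
    (x y z : ℕ → H)
    (hz : ∀ k : ℕ, z k = prox (x k - s • f' (x k)))
    (hy : ∀ k : ℕ, y (k + 1) = if F (z k) ≤ F (y k) then z k else y k)
    (hx : ∀ k : ℕ, x (k + 1) = y (k + 1) + (((k : ℝ)) / ((k : ℝ) + α)) • (y (k + 1) - y k)
        + (((k : ℝ) + α - 1) / ((k : ℝ) + α)) • (z k - y (k + 1))) :
    ∀ k : ℕ,
      ((k : ℝ) + 1) • (x (k + 1) - y (k + 1)) - (k : ℝ) • (x k - y k)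
          + (α - 1) • (x (k + 1) - x k)
        = (-(((k : ℝ) + α - 1) * s)) • Gs (x k) := by
  intro k
  have hc : (k:ℝ) + α ≠ 0 := by positivity
  have hs' : s ≠ 0 := ne_of_gt hs
  rw [hx k, hGs, ← hz k]
  match_scalars <;> field_simp <;> ring
end

section
/- Let α ≥ 3, 0 < s ≤ 1/L, f μ-strongly convex and L-smooth, g proper convex lsc, and let (x_k), (y_k) be generated by M-APM. Define E_k = (1/2)‖φ_k‖² + θ_k(F(y_k) - F*), where φ_k = k(x_k - y_k) + (α-1)(x_k - x*) and θ_k = k(k+α-1)s. Then E_{k+1} - E_k ≤ -((1-sL)(k+α-1)²/2)‖s G_s(x_k)‖² - (μ s k(k+α-1)/2)‖x_k - y_k‖² - (μ s (α-1)(k+α-1)/2)‖x_k - x*‖². -/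
open scoped RealInnerProductSpace

private lemma le_of_forall_small (A B C : ℝ) (hC : 0 ≤ C)
    (h : ∀ t : ℝ, 0 < t → t ≤ 1 → B ≤ A + t * C) : B ≤ A := by
  by_contra hcon
  push_neg at hcon
  rcases eq_or_lt_of_le hC with hC0 | hC0
  · have := h 1 one_pos le_rfl; nlinarith
  · have ht0 : 0 < min 1 ((B - A) / (2 * C)) := by
      exact lt_min one_pos (div_pos (by linarith) (by linarith))
    have := h _ ht0 (min_le_left _ _)
    have h2 : min 1 ((B - A) / (2 * C)) * C ≤ (B - A) / (2 * C) * C :=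
      mul_le_mul_of_nonneg_right (min_le_right _ _) hC
    have h3 : (B - A) / (2 * C) * C = (B - A) / 2 := by field_simp
    nlinarith

private lemma prox_subgrad {H : Type*} [NormedAddCommGroup H] [InnerProductSpace ℝ H]
    (g : H → ℝ) (hg : ConvexOn ℝ Set.univ g) (s : ℝ) (hs : 0 < s)
    (prox : H → H)
    (hprox : ∀ w, IsMinOn (fun u => g u + 1 / (2 * s) * ‖u - w‖ ^ 2) Set.univ (prox w))
    (w u : H) :
    g (prox w) + (1 / s) * ⟪w - prox w, u - prox w⟫ ≤ g u := by
  set z := prox w with hzdef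
  apply le_of_forall_small (g u) _ ((1 / (2 * s)) * ‖u - z‖ ^ 2) (by positivity)
  intro t ht0 ht1
  have hmin := isMinOn_iff.mp (hprox w) ((1 - t) • z + t • u) (Set.mem_univ _)
  have hconv := hg.2 (Set.mem_univ z) (Set.mem_univ u) (by linarith : (0:ℝ) ≤ 1 - t)
      (le_of_lt ht0) (by ring)
  simp only [smul_eq_mul] at hconv
  have hnorm : ‖((1 - t) • z + t • u) - w‖ ^ 2
      = ‖z - w‖ ^ 2 + 2 * t * ⟪z - w, u - z⟫ + t ^ 2 * ‖u - z‖ ^ 2 := by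
    have hrw : ((1 - t) • z + t • u) - w = (z - w) + t • (u - z) := by
      rw [sub_smul, one_smul, smul_sub]; abel
    rw [hrw, norm_add_sq_real, real_inner_smul_right, norm_smul, mul_pow]
    simp [abs_of_pos ht0]
    ring
  rw [hnorm] at hmin
  have hiner : ⟪w - z, u - z⟫ = -⟪z - w, u - z⟫ := by
    rw [← inner_neg_left, neg_sub]
  rw [hiner]
  have key : t * (g z + (1 / s) * (-⟪z - w, u - z⟫)) ≤ t * (g u + t * ((1 / (2 * s)) * ‖u - z‖ ^ 2)) := by
    have e1 : g z + 1 / (2 * s) * ‖z - w‖ ^ 2 ≤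
        (1 - t) * g z + t * g u + 1 / (2 * s) * (‖z - w‖ ^ 2 + 2 * t * ⟪z - w, u - z⟫ + t ^ 2 * ‖u - z‖ ^ 2) := by
      calc g z + 1 / (2 * s) * ‖z - w‖ ^ 2 ≤ _ := hmin
        _ ≤ _ := by linarith
    have hs' : (0:ℝ) < 2 * s := by linarith
    have expand : (1:ℝ) / (2 * s) * (‖z - w‖ ^ 2 + 2 * t * ⟪z - w, u - z⟫ + t ^ 2 * ‖u - z‖ ^ 2)
        = 1 / (2 * s) * ‖z - w‖ ^ 2 + t * (1/s) * ⟪z - w, u - z⟫ + t^2 * (1 / (2*s)) * ‖u - z‖ ^ 2 := by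
      field_simp
    rw [expand] at e1
    nlinarith [e1]
  have := (mul_le_mul_iff_right₀ ht0).mp key
  linarith


private lemma line_hasDerivAt {H : Type*} [NormedAddCommGroup H] [InnerProductSpace ℝ H]
    [CompleteSpace H]
    (f : H → ℝ) (f' : H → H) (hdiff : ∀ w, HasGradientAt f (f' w) w) (x d : H) (t : ℝ) :
    HasDerivAt (fun τ : ℝ => f (x + τ • d)) ⟪f' (x + t • d), d⟫ t := by
  have hline : HasDerivAt (fun τ : ℝ => x + τ • d) d t := by
    simpa using ((hasDerivAt_id t).smul_const d).const_add x
  have hfd := (hdiff (x + t • d)).hasFDerivAt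
  have := hfd.comp_hasDerivAt t hline
  simp [InnerProductSpace.toDual_apply_apply] at this
  exact this

private lemma descent_lemma {H : Type*} [NormedAddCommGroup H] [InnerProductSpace ℝ H]
    [CompleteSpace H]
    (f : H → ℝ) (f' : H → H) (L : ℝ) (hL : 0 < L)
    (hdiff : ∀ w, HasGradientAt f (f' w) w)
    (hlip : ∀ w v, ‖f' w - f' v‖ ≤ L * ‖w - v‖) (x z : H) :
    f z ≤ f x + ⟪f' x, z - x⟫ + L / 2 * ‖z - x‖ ^ 2 := by
  set d := z - x with hd
  set h : ℝ → ℝ := fun t => f (x + t • d) - t * ⟪f' x, d⟫ - t ^ 2 * (L / 2) * ‖d‖ ^ 2 with hh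
  have hderiv : ∀ t : ℝ, HasDerivAt h
      (⟪f' (x + t • d), d⟫ - ⟪f' x, d⟫ - 2 * t * (L / 2) * ‖d‖ ^ 2) t := by
    intro t
    have h1 := line_hasDerivAt f f' hdiff x d t
    have h2 : HasDerivAt (fun τ : ℝ => τ * ⟪f' x, d⟫) ⟪f' x, d⟫ t := by
      simpa using (hasDerivAt_id t).mul_const ⟪f' x, d⟫
    have h3 : HasDerivAt (fun τ : ℝ => τ ^ 2 * (L / 2) * ‖d‖ ^ 2)
        (2 * t * (L / 2) * ‖d‖ ^ 2) t := by
      have : HasDerivAt (fun τ : ℝ => τ ^ 2) (2 * t) t := by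
        simpa using hasDerivAt_pow 2 t
      simpa [mul_assoc] using (this.mul_const (L / 2)).mul_const (‖d‖ ^ 2)
    exact (h1.sub h2).sub h3
  have hanti : AntitoneOn h (Set.Icc 0 1) := by
    apply antitoneOn_of_deriv_nonpos (convex_Icc 0 1)
    · exact fun t _ => (hderiv t).continuousAt.continuousWithinAt
    · intro t _
      exact (hderiv t).differentiableAt.differentiableWithinAt
    · intro t ht
      rw [interior_Icc] at ht
      rw [(hderiv t).deriv]
      have hb : ⟪f' (x + t • d) - f' x, d⟫ ≤ L * t * ‖d‖ ^ 2 := by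
        calc ⟪f' (x + t • d) - f' x, d⟫ ≤ ‖f' (x + t • d) - f' x‖ * ‖d‖ :=
              real_inner_le_norm _ _
          _ ≤ L * ‖(x + t • d) - x‖ * ‖d‖ := by
              have := hlip (x + t • d) x
              have hdn : (0:ℝ) ≤ ‖d‖ := norm_nonneg d
              nlinarith
          _ = L * t * ‖d‖ ^ 2 := by
              rw [add_sub_cancel_left, norm_smul, Real.norm_eq_abs, abs_of_pos ht.1]
              ring
      have hinn : ⟪f' (x + t • d) - f' x, d⟫ = ⟪f' (x + t • d), d⟫ - ⟪f' x, d⟫ :=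
        inner_sub_left _ _ _
      rw [hinn] at hb
      nlinarith [ht.1.le]
  have key := hanti (Set.mem_Icc.mpr ⟨le_rfl, zero_le_one⟩)
      (Set.mem_Icc.mpr ⟨zero_le_one, le_rfl⟩) zero_le_one
  have hxz : x + d = z := by rw [hd]; abel
  simp only [hh, one_smul, zero_smul, add_zero, one_pow, zero_pow, one_mul, zero_mul,
    sub_zero, hxz] at key
  linarith

private lemma strong_lower {H : Type*} [NormedAddCommGroup H] [InnerProductSpace ℝ H]
    [CompleteSpace H]
    (f : H → ℝ) (f' : H → H) (μ : ℝ)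
    (hf : StrongConvexOn Set.univ μ f)
    (hdiff : ∀ w, HasGradientAt f (f' w) w) (x u : H) :
    f x + ⟪f' x, u - x⟫ + μ / 2 * ‖u - x‖ ^ 2 ≤ f u := by
  set d := u - x with hd
  have hder : HasDerivAt (fun τ : ℝ => f (x + τ • d)) ⟪f' x, d⟫ 0 := by
    have := line_hasDerivAt f f' hdiff x d 0
    simpa using this
  have hslope := hasDerivAt_iff_tendsto_slope.mp hder
  have hslope' : Filter.Tendsto (slope (fun τ : ℝ => f (x + τ • d)) 0) (nhdsWithin 0 (Set.Ioi 0))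
      (nhds ⟪f' x, d⟫) :=
    hslope.mono_left (nhdsWithin_mono 0 (fun t ht => by
      simp [Set.mem_Ioi] at ht ⊢; exact ne_of_gt ht))
  have hrhs : Filter.Tendsto (fun t : ℝ => f u - f x - (1 - t) * (μ / 2 * ‖x - u‖ ^ 2))
      (nhdsWithin 0 (Set.Ioi 0)) (nhds (f u - f x - μ / 2 * ‖x - u‖ ^ 2)) := by
    have : Filter.Tendsto (fun t : ℝ => f u - f x - (1 - t) * (μ / 2 * ‖x - u‖ ^ 2))
        (nhds 0) (nhds (f u - f x - (1 - 0) * (μ / 2 * ‖x - u‖ ^ 2))) := by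
      apply Filter.Tendsto.sub tendsto_const_nhds
      exact ((tendsto_const_nhds.sub Filter.tendsto_id).mul tendsto_const_nhds)
    simpa using this.mono_left nhdsWithin_le_nhds
  have hev : ∀ᶠ t in nhdsWithin (0:ℝ) (Set.Ioi 0),
      slope (fun τ : ℝ => f (x + τ • d)) 0 t ≤ f u - f x - (1 - t) * (μ / 2 * ‖x - u‖ ^ 2) := by
    filter_upwards [Ioo_mem_nhdsGT_of_mem (Set.mem_Ico.mpr ⟨le_rfl, zero_lt_one⟩)] with t ht
    obtain ⟨ht0, ht1⟩ := ht
    have hconv := hf.2 (Set.mem_univ x) (Set.mem_univ u) (by linarith : (0:ℝ) ≤ 1 - t)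
        ht0.le (by ring)
    simp only [smul_eq_mul] at hconv
    have hpt : (1 - t) • x + t • u = x + t • d := by
      rw [hd, smul_sub, sub_smul, one_smul]; abel
    rw [hpt] at hconv
    rw [slope_def_field]
    simp only [zero_smul, add_zero, sub_zero]
    rw [div_le_iff₀ ht0]
    nlinarith [hconv]
  have hfinal := le_of_tendsto_of_tendsto hslope' hrhs hev
  have hnn : ‖x - u‖ = ‖u - x‖ := norm_sub_rev x u
  rw [hnn] at hfinal
  linarith

private lemma fund_ineq {H : Type*} [NormedAddCommGroup H] [InnerProductSpace ℝ H]
    [CompleteSpace H]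
    (f : H → ℝ) (f' : H → H) (g : H → ℝ) (L μ s : ℝ)
    (hL : 0 < L) (hs : 0 < s)
    (hf : StrongConvexOn Set.univ μ f)
    (hdiff : ∀ w, HasGradientAt f (f' w) w)
    (hlip : ∀ w v, ‖f' w - f' v‖ ≤ L * ‖w - v‖)
    (hg : ConvexOn ℝ Set.univ g)
    (prox : H → H)
    (hprox : ∀ w, IsMinOn (fun u => g u + 1 / (2 * s) * ‖u - w‖ ^ 2) Set.univ (prox w))
    (F : H → ℝ) (hF : ∀ w, F w = f w + g w)
    (x z u : H) (hzdef : z = prox (x - s • f' x)) :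
    s * (F z - F u) + ((2 - s * L) / 2) * ‖x - z‖ ^ 2 + s * (μ / 2) * ‖x - u‖ ^ 2
      ≤ ⟪x - z, x - u⟫ := by
  set w : H := x - s • f' x with hw
  have hsub : g z + (1 / s) * ⟪w - z, u - z⟫ ≤ g u := by
    rw [hzdef] at *
    exact prox_subgrad g hg s hs prox hprox w u
  have hdes : f z ≤ f x + ⟪f' x, z - x⟫ + L / 2 * ‖z - x‖ ^ 2 :=
    descent_lemma f f' L hL hdiff hlip x z
  have hstr : f x + ⟪f' x, u - x⟫ + μ / 2 * ‖u - x‖ ^ 2 ≤ f u :=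
    strong_lower f f' μ hf hdiff x u
  -- expand inner products
  have e1 : ⟪f' x, z - x⟫ = -⟪f' x, x - z⟫ := by rw [← inner_neg_right, neg_sub]
  have e2 : ‖z - x‖ = ‖x - z‖ := norm_sub_rev z x
  have e3 : ‖u - x‖ = ‖x - u‖ := norm_sub_rev u x
  have e4 : ⟪f' x, u - x⟫ = -⟪f' x, x - u⟫ := by rw [← inner_neg_right, neg_sub]
  have e5 : ⟪w - z, u - z⟫
      = -⟪x - z, x - u⟫ + ‖x - z‖ ^ 2 + s * ⟪f' x, x - u⟫ - s * ⟪f' x, x - z⟫ := by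
    have hw' : w - z = (x - z) - s • f' x := by rw [hw]; abel
    have hu' : u - z = (x - z) - (x - u) := by abel
    rw [hw', hu']
    simp only [inner_sub_left, inner_sub_right, real_inner_smul_left,
      real_inner_self_eq_norm_sq, norm_sub_sq_real, real_inner_comm z x]
    ring
  rw [e1, e2] at hdes
  rw [e3, e4] at hstr
  rw [e5] at hsub
  have hsub' := mul_le_mul_of_nonneg_left hsub hs.le
  rw [hF z, hF u]
  have hsinv : s * ((1:ℝ) / s * (-⟪x - z, x - u⟫ + ‖x - z‖ ^ 2 + s * ⟪f' x, x - u⟫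
      - s * ⟪f' x, x - z⟫)) = -⟪x - z, x - u⟫ + ‖x - z‖ ^ 2 + s * ⟪f' x, x - u⟫
      - s * ⟪f' x, x - z⟫ := by
    field_simp
  rw [mul_add, hsinv] at hsub'
  nlinarith [hdes, hstr, hsub', hs.le]

/-- Proposition 1: quantified decrease of the energy sequence for M-APM. -/
theorem mapm_energy_decrease
    {H : Type*} [NormedAddCommGroup H] [InnerProductSpace ℝ H] [CompleteSpace H]
    (f : H → ℝ) (f' : H → H) (g : H → ℝ) (L μ s α : ℝ)
    (hα : 3 ≤ α) (hL : 0 < L) (hμ : 0 ≤ μ) (hs : 0 < s) (hsL : s ≤ 1 / L)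
    (hf : StrongConvexOn Set.univ μ f)
    (hdiff : ∀ w, HasGradientAt f (f' w) w)
    (hlip : ∀ w v, ‖f' w - f' v‖ ≤ L * ‖w - v‖)
    (hg : ConvexOn ℝ Set.univ g) (hg_lsc : LowerSemicontinuous g)
    (prox : H → H)
    (hprox : ∀ w, IsMinOn (fun u => g u + 1 / (2 * s) * ‖u - w‖ ^ 2) Set.univ (prox w))
    (F : H → ℝ) (hF : ∀ w, F w = f w + g w)
    (Gs : H → H) (hGs : ∀ w, Gs w = (1 / s) • (w - prox (w - s • f' w)))
    (xstar : H) (hmin : IsMinOn F Set.univ xstar)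
    (x y z : ℕ → H)
    (hz : ∀ k : ℕ, z k = prox (x k - s • f' (x k)))
    (hy : ∀ k : ℕ, y (k + 1) = if F (z k) ≤ F (y k) then z k else y k)
    (hx : ∀ k : ℕ, x (k + 1) = y (k + 1) + (((k : ℝ)) / ((k : ℝ) + α)) • (y (k + 1) - y k)
        + (((k : ℝ) + α - 1) / ((k : ℝ) + α)) • (z k - y (k + 1)))
    (E : ℕ → ℝ)
    (hE : ∀ k : ℕ, E k = 1 / 2 * ‖(k : ℝ) • (x k - y k) + (α - 1) • (x k - xstar)‖ ^ 2
        + (k : ℝ) * ((k : ℝ) + α - 1) * s * (F (y k) - F xstar)) :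
    ∀ k : ℕ,
      E (k + 1) - E k ≤
        -((1 - s * L) * ((k : ℝ) + α - 1) ^ 2 / 2) * ‖s • Gs (x k)‖ ^ 2
        - μ * s * (k : ℝ) * ((k : ℝ) + α - 1) / 2 * ‖x k - y k‖ ^ 2
        - μ * s * (α - 1) * ((k : ℝ) + α - 1) / 2 * ‖x k - xstar‖ ^ 2 := by
  intro k
  have hK : (0:ℝ) ≤ (k:ℝ) := Nat.cast_nonneg k
  have hd : (k:ℝ) + α ≠ 0 := by positivity
  -- s • Gs (x k) = x k - z k
  have hGv : s • Gs (x k) = x k - z k := by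
    rw [hGs, ← hz k, smul_smul, mul_one_div, div_self hs.ne', one_smul]
  -- vector identity for the next φ
  have hphi : ((k:ℝ) + 1) • (x (k+1) - y (k+1)) + (α - 1) • (x (k+1) - xstar)
      = ((k:ℝ) • (x k - y k) + (α - 1) • (x k - xstar)) - ((k:ℝ) + α - 1) • (x k - z k) := by
    rw [hx k]
    match_scalars <;> field_simp <;> ring
  -- norm expansion
  have hns : ‖(((k:ℝ) • (x k - y k) + (α - 1) • (x k - xstar))
        - ((k:ℝ) + α - 1) • (x k - z k))‖ ^ 2
      = ‖(k:ℝ) • (x k - y k) + (α - 1) • (x k - xstar)‖ ^ 2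
        - 2 * (((k:ℝ) + α - 1) * ((k:ℝ) * ⟪x k - y k, x k - z k⟫
          + (α - 1) * ⟪x k - xstar, x k - z k⟫))
        + ((k:ℝ) + α - 1) ^ 2 * ‖x k - z k‖ ^ 2 := by
    rw [norm_sub_sq_real]
    rw [inner_add_left, real_inner_smul_right, real_inner_smul_right,
      real_inner_smul_left, real_inner_smul_left, norm_smul, mul_pow,
      Real.norm_eq_abs, sq_abs]
    ring
  -- fundamental inequalities
  have hf1 : s * (F (z k) - F (y k)) + ((2 - s * L) / 2) * ‖x k - z k‖ ^ 2
      + s * (μ / 2) * ‖x k - y k‖ ^ 2 ≤ ⟪x k - y k, x k - z k⟫ := by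
    rw [real_inner_comm]
    exact fund_ineq f f' g L μ s hL hs hf hdiff hlip hg prox hprox F hF
      (x k) (z k) (y k) (hz k)
  have hf2 : s * (F (z k) - F xstar) + ((2 - s * L) / 2) * ‖x k - z k‖ ^ 2
      + s * (μ / 2) * ‖x k - xstar‖ ^ 2 ≤ ⟪x k - xstar, x k - z k⟫ := by
    rw [real_inner_comm]
    exact fund_ineq f f' g L μ s hL hs hf hdiff hlip hg prox hprox F hF
      (x k) (z k) xstar (hz k)
  -- properties of y (k+1)
  have hyP : F (y (k+1)) ≤ F (z k) := by
    rw [hy k]; split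
    · exact le_rfl
    · next h => exact (not_le.mp h).le
  have hyQ : F (y (k+1)) ≤ F (y k) := by
    rw [hy k]; split
    · next h => exact h
    · exact le_rfl
  have hPmin : F xstar ≤ F (z k) := isMinOn_iff.mp hmin (z k) (Set.mem_univ _)
  have hRmin : F xstar ≤ F (y (k+1)) := isMinOn_iff.mp hmin (y (k+1)) (Set.mem_univ _)
  -- energy expressions
  have hE1 := hE (k+1)
  have hE0 := hE k
  push_cast at hE1
  rw [hphi, hns] at hE1
  -- scalar bookkeeping
  have hm0 : (0:ℝ) ≤ (k:ℝ) + α - 1 := by linarith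
  have hcoef : ((k:ℝ) + 1) * ((k:ℝ) + α) ≤ ((k:ℝ) + α - 1) ^ 2 := by nlinarith
  have e1 : 0 ≤ ((k:ℝ) + α - 1) * (k:ℝ) * (⟪x k - y k, x k - z k⟫
      - (s * (F (z k) - F (y k)) + ((2 - s * L) / 2) * ‖x k - z k‖ ^ 2
        + s * (μ / 2) * ‖x k - y k‖ ^ 2)) :=
    mul_nonneg (mul_nonneg hm0 hK) (by linarith)
  have e2 : 0 ≤ ((k:ℝ) + α - 1) * (α - 1) * (⟪x k - xstar, x k - z k⟫
      - (s * (F (z k) - F xstar) + ((2 - s * L) / 2) * ‖x k - z k‖ ^ 2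
        + s * (μ / 2) * ‖x k - xstar‖ ^ 2)) :=
    mul_nonneg (mul_nonneg hm0 (by linarith)) (by linarith)
  have e3 : s * (((k:ℝ) + 1) * ((k:ℝ) + α) * (F (y (k+1)) - F xstar))
      ≤ s * (((k:ℝ) + α - 1) ^ 2 * (F (z k) - F xstar)) := by
    apply mul_le_mul_of_nonneg_left _ hs.le
    calc ((k:ℝ) + 1) * ((k:ℝ) + α) * (F (y (k+1)) - F xstar)
        ≤ ((k:ℝ) + α - 1) ^ 2 * (F (y (k+1)) - F xstar) :=
          mul_le_mul_of_nonneg_right hcoef (by linarith)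
      _ ≤ ((k:ℝ) + α - 1) ^ 2 * (F (z k) - F xstar) :=
          mul_le_mul_of_nonneg_left (by linarith) (sq_nonneg _)
  rw [hGv]
  linarith [e1, e2, e3, hE0, hE1]
end

section
/- Under the hypotheses of the energy-decrease proposition for M-APM (α ≥ 3, 0 < s ≤ 1/L, f convex and L-smooth), the energy sequence E_k = (1/2)‖k(x_k - y_k) + (α-1)(x_k - x*)‖² + k(k+α-1)s(F(y_k) - F*) is nonincreasing in k. -/
open Set Filter Topology

local notation "⟪" x ", " y "⟫" => @inner ℝ _ _ x y

section Aux
variable {H : Type*} [NormedAddCommGroup H] [InnerProductSpace ℝ H] [CompleteSpace H]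

/-- convexity gradient inequality -/
lemma my_grad_convex (f : H → ℝ) (f' : H → H) (hf : ConvexOn ℝ Set.univ f)
    (hdiff : ∀ w, HasGradientAt f (f' w) w) (x u : H) :
    f x + ⟪f' x, u - x⟫ ≤ f u := by
  set φ : ℝ → ℝ := fun t => f (x + t • (u - x)) with hφ
  have hD : HasDerivAt φ ⟪f' x, u - x⟫ 0 := by
    have hc : HasDerivAt (fun t : ℝ => x + t • (u - x)) (u - x) 0 := by
      simpa using ((hasDerivAt_id (0:ℝ)).smul_const (u - x)).const_add x
    have h2 := (hdiff (x + (0:ℝ) • (u - x))).hasFDerivAt.comp_hasDerivAt 0 hc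
    simp [hφ, InnerProductSpace.toDual_apply_apply] at h2
    exact h2
  have hslope : Tendsto (slope φ 0) (𝓝[>] 0) (𝓝 ⟪f' x, u - x⟫) := by
    have := hasDerivAt_iff_tendsto_slope.mp hD
    exact this.mono_left (nhdsWithin_mono _ (fun t ht => ne_of_gt ht))
  have hev : ∀ᶠ t in 𝓝[>] (0:ℝ), slope φ 0 t ≤ f u - f x := by
    filter_upwards [Ioo_mem_nhdsGT_of_mem (by norm_num : (0:ℝ) ∈ Ico (0:ℝ) 1)] with t ht
    have ht0 : 0 < t := ht.1
    have ht1 : t < 1 := ht.2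
    have hcx : φ t ≤ (1 - t) * f x + t * f u := by
      have := hf.2 (mem_univ x) (mem_univ u) (by linarith : (0:ℝ) ≤ 1 - t)
        (le_of_lt ht0) (by ring)
      have heq : (1 - t) • x + t • u = x + t • (u - x) := by
        rw [sub_smul, smul_sub, one_smul]; abel
      simpa [hφ, heq] using this
    have hφ0 : φ 0 = f x := by simp [hφ]
    rw [slope_def_field, div_le_iff₀ (by simpa using ht0)]
    nlinarith [hcx, hφ0]
  have := le_of_tendsto hslope hev
  linarith

/-- descent lemma -/
lemma my_descent (f : H → ℝ) (f' : H → H) (L : ℝ) (hL : 0 < L)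
    (hdiff : ∀ w, HasGradientAt f (f' w) w)
    (hlip : ∀ w v, ‖f' w - f' v‖ ≤ L * ‖w - v‖) (x u : H) :
    f u ≤ f x + ⟪f' x, u - x⟫ + L / 2 * ‖u - x‖ ^ 2 := by
  set v : H := u - x with hv
  set ψ : ℝ → ℝ := fun t => f (x + t • v) - t * ⟪f' x, v⟫ - L / 2 * t ^ 2 * ‖v‖ ^ 2 with hψ
  have hDer : ∀ t : ℝ, HasDerivAt ψ (⟪f' (x + t • v), v⟫ - ⟪f' x, v⟫ - L * t * ‖v‖ ^ 2) t := by
    intro t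
    have hc : HasDerivAt (fun t : ℝ => x + t • v) v t := by
      simpa using ((hasDerivAt_id t).smul_const v).const_add x
    have h1 : HasDerivAt (fun t : ℝ => f (x + t • v)) ⟪f' (x + t • v), v⟫ t := by
      have h2 := (hdiff (x + t • v)).hasFDerivAt.comp_hasDerivAt t hc
      simp [InnerProductSpace.toDual_apply_apply] at h2
      exact h2
    have h3 : HasDerivAt (fun t : ℝ => t * ⟪f' x, v⟫) ⟪f' x, v⟫ t := by
      simpa using (hasDerivAt_id t).mul_const ⟪f' x, v⟫
    have h4 : HasDerivAt (fun t : ℝ => L / 2 * t ^ 2 * ‖v‖ ^ 2) (L * t * ‖v‖ ^ 2) t := by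
      have h := ((hasDerivAt_pow 2 t).const_mul (L / 2)).mul_const (‖v‖ ^ 2)
      refine h.congr_deriv ?_
      push_cast
      ring
    exact (h1.sub h3).sub h4
  have hanti : AntitoneOn ψ (Icc 0 1) := by
    apply antitoneOn_of_deriv_nonpos (convex_Icc 0 1)
    · exact fun t _ => ((hDer t).continuousAt).continuousWithinAt
    · intro t ht
      exact ((hDer t).differentiableAt).differentiableWithinAt
    · intro t ht
      rw [interior_Icc] at ht
      rw [(hDer t).deriv]
      have h1 : ⟪f' (x + t • v) - f' x, v⟫ ≤ ‖f' (x + t • v) - f' x‖ * ‖v‖ :=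
        real_inner_le_norm _ _
      have h2 : ‖f' (x + t • v) - f' x‖ ≤ L * (t * ‖v‖) := by
        have := hlip (x + t • v) x
        simpa [norm_smul, abs_of_pos ht.1, mul_assoc] using this
      have h3 : ⟪f' (x + t • v), v⟫ - ⟪f' x, v⟫ = ⟪f' (x + t • v) - f' x, v⟫ := by
        rw [inner_sub_left]
      rw [h3]
      nlinarith [norm_nonneg v, norm_nonneg (f' (x + t • v) - f' x), ht.1.le]
  have := hanti (by norm_num : (0:ℝ) ∈ Icc (0:ℝ) 1) (by norm_num : (1:ℝ) ∈ Icc (0:ℝ) 1)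
    (by norm_num)
  simp only [hψ] at this
  simp only [zero_smul, one_smul, add_zero, zero_mul, sub_zero] at this
  have h0 : x + v = u := by rw [hv]; abel
  rw [h0] at this
  nlinarith [this]

/-- prox subgradient inequality -/
lemma my_prox_ineq (g : H → ℝ) (s : ℝ) (hs : 0 < s) (hg : ConvexOn ℝ Set.univ g)
    (prox : H → H)
    (hprox : ∀ w, IsMinOn (fun u => g u + 1 / (2 * s) * ‖u - w‖ ^ 2) Set.univ (prox w))
    (w u : H) :
    g (prox w) + (1 / s) * ⟪w - prox w, u - prox w⟫ ≤ g u := by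
  set p : H := prox w with hp
  have key : ∀ t : ℝ, t ∈ Ioc (0:ℝ) 1 →
      (1 / s) * ⟪w - p, u - p⟫ + g p ≤ g u + t * (1 / (2 * s) * ‖u - p‖ ^ 2) := by
    intro t ht
    have hmin := isMinOn_iff.mp (hprox w) (p + t • (u - p)) (mem_univ _)
    have hcx : g (p + t • (u - p)) ≤ (1 - t) * g p + t * g u := by
      have := hg.2 (mem_univ p) (mem_univ u) (by linarith [ht.2] : (0:ℝ) ≤ 1 - t)
        (le_of_lt ht.1) (by ring)
      have heq : (1 - t) • p + t • u = p + t • (u - p) := by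
        rw [sub_smul, smul_sub, one_smul]; abel
      simpa [heq] using this
    have hnorm : ‖p + t • (u - p) - w‖ ^ 2
        = ‖p - w‖ ^ 2 + 2 * (t * ⟪p - w, u - p⟫) + t ^ 2 * ‖u - p‖ ^ 2 := by
      have h1 : p + t • (u - p) - w = (p - w) + t • (u - p) := by abel
      rw [h1, norm_add_sq_real, real_inner_smul_right, norm_smul]
      rw [mul_pow, Real.norm_eq_abs, sq_abs]
    have hs' : 0 < 2 * s := by linarith
    have hinner : ⟪w - p, u - p⟫ = - ⟪p - w, u - p⟫ := by
      rw [← inner_neg_left]; simp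
    have ht0 := ht.1
    rw [hnorm] at hmin
    have hdiv : 0 ≤ t * (g u - g p) + (t / s) * ⟪p - w, u - p⟫
        + t ^ 2 * (1 / (2 * s)) * ‖u - p‖ ^ 2 := by
      have expand : g p + 1 / (2 * s) * ‖p - w‖ ^ 2
          ≤ (1 - t) * g p + t * g u + 1 / (2 * s) *
            (‖p - w‖ ^ 2 + 2 * (t * ⟪p - w, u - p⟫) + t ^ 2 * ‖u - p‖ ^ 2) := by
        calc g p + 1 / (2 * s) * ‖p - w‖ ^ 2 ≤ _ := hmin
          _ ≤ _ := by gcongr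
      have hs2 : (1:ℝ) / (2 * s) * (2 * (t * ⟪p - w, u - p⟫)) = (t / s) * ⟪p - w, u - p⟫ := by
        field_simp
      nlinarith [expand]
    rw [hinner]
    have := mul_le_mul_of_nonneg_left (le_refl (0:ℝ)) (le_of_lt ht0)
    -- divide hdiv by t
    have hdiv2 : 0 ≤ (g u - g p) + (1 / s) * ⟪p - w, u - p⟫ + t * (1 / (2 * s)) * ‖u - p‖ ^ 2 := by
      have := div_nonneg hdiv (le_of_lt ht0)
      have heq : (t * (g u - g p) + (t / s) * ⟪p - w, u - p⟫
          + t ^ 2 * (1 / (2 * s)) * ‖u - p‖ ^ 2) / t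
          = (g u - g p) + (1 / s) * ⟪p - w, u - p⟫ + t * (1 / (2 * s)) * ‖u - p‖ ^ 2 := by
        field_simp
      rwa [heq] at this
    linarith
  have hten : Tendsto (fun t : ℝ => g u + t * (1 / (2 * s) * ‖u - p‖ ^ 2)) (𝓝[>] (0:ℝ))
      (𝓝 (g u)) := by
    have : Tendsto (fun t : ℝ => g u + t * (1 / (2 * s) * ‖u - p‖ ^ 2)) (𝓝 (0:ℝ))
        (𝓝 (g u + 0 * (1 / (2 * s) * ‖u - p‖ ^ 2))) := by
      exact (continuous_const.add (continuous_id.mul continuous_const)).tendsto 0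
    simpa using this.mono_left nhdsWithin_le_nhds
  have hev : ∀ᶠ t in 𝓝[>] (0:ℝ), (1 / s) * ⟪w - p, u - p⟫ + g p
      ≤ g u + t * (1 / (2 * s) * ‖u - p‖ ^ 2) := by
    filter_upwards [Ioc_mem_nhdsGT_of_mem (by norm_num : (0:ℝ) ∈ Ico (0:ℝ) 1)] with t ht
    exact key t ht
  have := ge_of_tendsto hten hev
  linarith

end Aux

section KeyLemma
variable {H : Type*} [NormedAddCommGroup H] [InnerProductSpace ℝ H] [CompleteSpace H]

lemma my_key (f : H → ℝ) (f' : H → H) (g : H → ℝ) (L s : ℝ)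
    (hL : 0 < L) (hs : 0 < s) (hsL : s ≤ 1 / L)
    (hf : ConvexOn ℝ Set.univ f)
    (hdiff : ∀ w, HasGradientAt f (f' w) w)
    (hlip : ∀ w v, ‖f' w - f' v‖ ≤ L * ‖w - v‖)
    (hg : ConvexOn ℝ Set.univ g)
    (prox : H → H)
    (hprox : ∀ w, IsMinOn (fun u => g u + 1 / (2 * s) * ‖u - w‖ ^ 2) Set.univ (prox w))
    (F : H → ℝ) (hF : ∀ w, F w = f w + g w) (w u : H) :
    s * F (prox (w - s • f' w)) ≤ s * F u + ⟪w - prox (w - s • f' w), w - u⟫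
      - 1 / 2 * ‖w - prox (w - s • f' w)‖ ^ 2 := by
  set z := prox (w - s • f' w) with hzdef
  have hdesc := my_descent f f' L hL hdiff hlip w z
  have hconv := my_grad_convex f f' hf hdiff w u
  have hpx := my_prox_ineq g s hs hg prox hprox (w - s • f' w) u
  rw [← hzdef] at hpx
  have hLs : s * L ≤ 1 := (le_div_iff₀ hL).mp hsL
  have hpx2 : s * g z + ⟪w - s • f' w - z, u - z⟫ ≤ s * g u := by
    have h := mul_le_mul_of_nonneg_left hpx hs.le
    rw [mul_add, ← mul_assoc, mul_one_div_cancel hs.ne', one_mul] at h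
    exact h
  have hdesc2 : s * f z ≤ s * f w + s * ⟪f' w, z - w⟫ + s * (L / 2 * ‖z - w‖ ^ 2) := by
    have h := mul_le_mul_of_nonneg_left hdesc hs.le
    rw [mul_add, mul_add] at h
    exact h
  have hconv2 : s * f w + s * ⟪f' w, u - w⟫ ≤ s * f u := by
    have h := mul_le_mul_of_nonneg_left hconv hs.le
    rw [mul_add] at h
    exact h
  have e1 : ⟪w - s • f' w - z, u - z⟫ = ⟪w - z, u - z⟫ - s * ⟪f' w, u - z⟫ := by
    rw [show w - s • f' w - z = (w - z) - s • f' w from by abel, inner_sub_left,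
      real_inner_smul_left]
  have e2 : ⟪w - z, u - z⟫ = ⟪w - z, u - w⟫ + ‖w - z‖ ^ 2 := by
    rw [show (u - z : H) = (u - w) + (w - z) from by abel, inner_add_right,
      real_inner_self_eq_norm_sq]
  have e3 : ⟪w - z, u - w⟫ = -⟪w - z, w - u⟫ := by
    rw [show (u - w : H) = -(w - u) from by abel, inner_neg_right]
  have e4 : ⟪f' w, z - w⟫ + ⟪f' w, u - z⟫ = ⟪f' w, u - w⟫ := by
    rw [← inner_add_right]
    congr 1
    abel
  have hnrm : ‖z - w‖ = ‖w - z‖ := norm_sub_rev _ _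
  have hld : 0 ≤ (1 - s * L) * ‖w - z‖ ^ 2 :=
    mul_nonneg (by linarith) (sq_nonneg _)
  rw [hF z, hF u]
  rw [hnrm] at hdesc2
  nlinarith [hdesc2, hconv2, hpx2, e1, e2, e3, e4, hld]

end KeyLemma

set_option maxHeartbeats 1600000 in
/-- Remark 1: the M-APM energy sequence is nonincreasing. -/
theorem mapm_energy_nonincreasing
    {H : Type*} [NormedAddCommGroup H] [InnerProductSpace ℝ H] [CompleteSpace H]
    (f : H → ℝ) (f' : H → H) (g : H → ℝ) (L s α : ℝ)
    (hα : 3 ≤ α) (hL : 0 < L) (hs : 0 < s) (hsL : s ≤ 1 / L)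
    (hf : ConvexOn ℝ Set.univ f)
    (hdiff : ∀ w, HasGradientAt f (f' w) w)
    (hlip : ∀ w v, ‖f' w - f' v‖ ≤ L * ‖w - v‖)
    (hg : ConvexOn ℝ Set.univ g) (hg_lsc : LowerSemicontinuous g)
    (prox : H → H)
    (hprox : ∀ w, IsMinOn (fun u => g u + 1 / (2 * s) * ‖u - w‖ ^ 2) Set.univ (prox w))
    (F : H → ℝ) (hF : ∀ w, F w = f w + g w)
    (Gs : H → H) (hGs : ∀ w, Gs w = (1 / s) • (w - prox (w - s • f' w)))
    (xstar : H) (hmin : IsMinOn F Set.univ xstar)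
    (x y z : ℕ → H)
    (hz : ∀ k : ℕ, z k = prox (x k - s • f' (x k)))
    (hy : ∀ k : ℕ, y (k + 1) = if F (z k) ≤ F (y k) then z k else y k)
    (hx : ∀ k : ℕ, x (k + 1) = y (k + 1) + (((k : ℝ)) / ((k : ℝ) + α)) • (y (k + 1) - y k)
        + (((k : ℝ) + α - 1) / ((k : ℝ) + α)) • (z k - y (k + 1)))
    (E : ℕ → ℝ)
    (hE : ∀ k : ℕ, E k = 1 / 2 * ‖(k : ℝ) • (x k - y k) + (α - 1) • (x k - xstar)‖ ^ 2
        + (k : ℝ) * ((k : ℝ) + α - 1) * s * (F (y k) - F xstar)) :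
    ∀ k : ℕ, E (k + 1) ≤ E k := by

  intro k
  have hn : (0:ℝ) ≤ (k : ℝ) := Nat.cast_nonneg k
  set n : ℝ := (k : ℝ) with hndef
  have hcne : n + α ≠ 0 := by positivity
  -- key inequalities at w = x k
  have hkey : ∀ u : H, s * F (z k) ≤ s * F u + ⟪x k - z k, x k - u⟫
      - 1 / 2 * ‖x k - z k‖ ^ 2 := by
    intro u
    have h := my_key f f' g L s hL hs hsL hf hdiff hlip hg prox hprox F hF (x k) u
    rw [← hz k] at h
    exact h
  have hky := hkey (y k)
  have hkstar := hkey xstar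
  -- min of F
  have hm : ∀ v, F xstar ≤ F v := fun v => isMinOn_iff.mp hmin v (mem_univ v)
  -- monotone choice
  have hyz : F (y (k + 1)) ≤ F (z k) ∧ F (y (k + 1)) ≤ F (y k) := by
    rw [hy k]
    split_ifs with h
    · exact ⟨le_rfl, h⟩
    · exact ⟨le_of_not_ge h, le_rfl⟩
  -- vector identity
  have hvec : (n + 1) • (x (k + 1) - y (k + 1)) + (α - 1) • (x (k + 1) - xstar)
      = (n • (x k - y k) + (α - 1) • (x k - xstar)) - (n + α - 1) • (x k - z k) := by
    rw [hx k]
    match_scalars <;> field_simp <;> ring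
  -- norm expansion
  have hexp : ‖(n • (x k - y k) + (α - 1) • (x k - xstar)) - (n + α - 1) • (x k - z k)‖ ^ 2
      = ‖n • (x k - y k) + (α - 1) • (x k - xstar)‖ ^ 2
        - 2 * ((n + α - 1) * ⟪n • (x k - y k) + (α - 1) • (x k - xstar), x k - z k⟫)
        + (n + α - 1) ^ 2 * ‖x k - z k‖ ^ 2 := by
    rw [norm_sub_sq_real, real_inner_smul_right, norm_smul, Real.norm_eq_abs, mul_pow, sq_abs]
  have hinner : ⟪n • (x k - y k) + (α - 1) • (x k - xstar), x k - z k⟫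
      = n * ⟪x k - y k, x k - z k⟫ + (α - 1) * ⟪x k - xstar, x k - z k⟫ := by
    rw [inner_add_left, real_inner_smul_left, real_inner_smul_left]
  have hc1 : ⟪x k - z k, x k - y k⟫ = ⟪x k - y k, x k - z k⟫ := real_inner_comm _ _
  have hc2 : ⟪x k - z k, x k - xstar⟫ = ⟪x k - xstar, x k - z k⟫ := real_inner_comm _ _
  rw [hc1] at hky
  rw [hc2] at hkstar
  -- multiplied key inequalities
  have hco1 : (0:ℝ) ≤ (n + α - 1) * n := by nlinarith
  have hco2 : (0:ℝ) ≤ (n + α - 1) * (α - 1) := by nlinarith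
  have hky2 := mul_le_mul_of_nonneg_left hky hco1
  have hkstar2 := mul_le_mul_of_nonneg_left hkstar hco2
  -- coefficient comparison terms
  have hcoef : (n + 1) * (n + α) ≤ (n + α - 1) ^ 2 := by nlinarith
  have h1 : (0:ℝ) ≤ ((n + α - 1) ^ 2 - (n + 1) * (n + α)) * (s * (F (z k) - F xstar)) :=
    mul_nonneg (by linarith) (mul_nonneg hs.le (by linarith [hm (z k)]))
  have h2 : (0:ℝ) ≤ ((n + 1) * (n + α)) * (s * (F (z k) - F (y (k + 1)))) :=
    mul_nonneg (by nlinarith) (mul_nonneg hs.le (by linarith [hyz.1]))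
  -- expand energies
  rw [hE k, hE (k + 1)]
  push_cast
  rw [← hndef, hvec, hexp]
  nlinarith [hky2, hkstar2, hinner, h1, h2, sq_nonneg ‖x k - z k‖]
end

section
/- Under the M-APM energy-decrease and energy-upper-bound estimates (α ≥ 3, 0 < s ≤ 1/L, f μ-strongly convex with 0 < μ ≤ L), for each k there holds (1+ρ_k)E_{k+1} ≤ E_k with ρ_k = min{ μs(1-sL)/(1 + μs(sL - 1 + 1/λ + σ)), μs(k+α-1)/(k(1+ω+λ)), μs(k+α-1)/((α-1)(1 + 1/ω + 1/σ)) } for any choice of ω, λ, σ > 0. -/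
/-- The contraction step (1 + ρ) E_{k+1} ≤ E_k, assuming the conclusions of
Propositions 1 and 2. -/
theorem mapm_linear_contraction
    {H : Type*} [NormedAddCommGroup H] [InnerProductSpace ℝ H] [CompleteSpace H]
    (f : H → ℝ) (f' : H → H) (g : H → ℝ) (L μ s α : ℝ)
    (hα : 3 ≤ α) (hL : 0 < L) (hμ : 0 < μ) (hμL : μ ≤ L) (hs : 0 < s) (hsL : s ≤ 1 / L)
    (hf : StrongConvexOn Set.univ μ f)
    (hdiff : ∀ w, HasGradientAt f (f' w) w)
    (hlip : ∀ w v, ‖f' w - f' v‖ ≤ L * ‖w - v‖)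
    (hg : ConvexOn ℝ Set.univ g) (hg_lsc : LowerSemicontinuous g)
    (prox : H → H)
    (hprox : ∀ w, IsMinOn (fun u => g u + 1 / (2 * s) * ‖u - w‖ ^ 2) Set.univ (prox w))
    (F : H → ℝ) (hF : ∀ w, F w = f w + g w)
    (Gs : H → H) (hGs : ∀ w, Gs w = (1 / s) • (w - prox (w - s • f' w)))
    (xstar : H) (hmin : IsMinOn F Set.univ xstar)
    (x y z : ℕ → H)
    (hz : ∀ k : ℕ, z k = prox (x k - s • f' (x k)))
    (hy : ∀ k : ℕ, y (k + 1) = if F (z k) ≤ F (y k) then z k else y k)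
    (hx : ∀ k : ℕ, x (k + 1) = y (k + 1) + (((k : ℝ)) / ((k : ℝ) + α)) • (y (k + 1) - y k)
        + (((k : ℝ) + α - 1) / ((k : ℝ) + α)) • (z k - y (k + 1)))
    (E : ℕ → ℝ)
    (hE : ∀ k : ℕ, E k = 1 / 2 * ‖(k : ℝ) • (x k - y k) + (α - 1) • (x k - xstar)‖ ^ 2
        + (k : ℝ) * ((k : ℝ) + α - 1) * s * (F (y k) - F xstar))
    (hdec : ∀ k : ℕ,
      E (k + 1) - E k ≤
        -((1 - s * L) * ((k : ℝ) + α - 1) ^ 2 / 2) * ‖s • Gs (x k)‖ ^ 2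
        - μ * s * (k : ℝ) * ((k : ℝ) + α - 1) / 2 * ‖x k - y k‖ ^ 2
        - μ * s * (α - 1) * ((k : ℝ) + α - 1) / 2 * ‖x k - xstar‖ ^ 2)
    (hub : ∀ k : ℕ, ∀ ω lam σ : ℝ, 0 < ω → 0 < lam → 0 < σ →
      E (k + 1) ≤
        (k : ℝ) ^ 2 / 2 * (1 + ω + lam) * ‖x k - y k‖ ^ 2
        + (α - 1) ^ 2 / 2 * (1 + 1 / ω + 1 / σ) * ‖x k - xstar‖ ^ 2
        + ((k : ℝ) + α - 1) ^ 2 / 2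
            * (1 + 1 / lam + σ + (1 - μ * s * (2 - s * L)) / (μ * s))
            * ‖s • Gs (x k)‖ ^ 2) :
    ∀ k : ℕ, ∀ ω lam σ : ℝ, 0 < ω → 0 < lam → 0 < σ →
      (1 + min (min
          (μ * s * (1 - s * L) / (1 + μ * s * (s * L - 1 + 1 / lam + σ)))
          (μ * s * ((k : ℝ) + α - 1) / ((k : ℝ) * (1 + ω + lam))))
          (μ * s * ((k : ℝ) + α - 1) / ((α - 1) * (1 + 1 / ω + 1 / σ))))
        * E (k + 1) ≤ E k := by
  intro k ω lam σ hω hlam hσ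
  have ha : (0:ℝ) ≤ ‖s • Gs (x k)‖ ^ 2 := by positivity
  have hb : (0:ℝ) ≤ ‖x k - y k‖ ^ 2 := by positivity
  have hc : (0:ℝ) ≤ ‖x k - xstar‖ ^ 2 := by positivity
  have hk0 : (0:ℝ) ≤ (k:ℝ) := Nat.cast_nonneg k
  have hα2 : (2:ℝ) ≤ α - 1 := by linarith
  have hkα : (0:ℝ) < (k:ℝ) + α - 1 := by linarith
  have hsL' : s * L ≤ 1 := by
    rw [le_div_iff₀ hL] at hsL; linarith
  have hμs : 0 < μ * s := mul_pos hμ hs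
  have hμs1 : μ * s ≤ 1 := by
    have h := mul_le_mul_of_nonneg_right hμL hs.le
    linarith [h, hsL']
  have hx1 : (0:ℝ) < s * L + 1 / lam + σ := by positivity
  have hD1 : (0:ℝ) < 1 + μ * s * (s * L - 1 + 1 / lam + σ) := by
    linarith [mul_pos hμs hx1]
  set ρ := min (min
          (μ * s * (1 - s * L) / (1 + μ * s * (s * L - 1 + 1 / lam + σ)))
          (μ * s * ((k : ℝ) + α - 1) / ((k : ℝ) * (1 + ω + lam))))
          (μ * s * ((k : ℝ) + α - 1) / ((α - 1) * (1 + 1 / ω + 1 / σ))) with hρdef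
  have hρ1 : 0 ≤ μ * s * (1 - s * L) / (1 + μ * s * (s * L - 1 + 1 / lam + σ)) :=
    div_nonneg (mul_nonneg hμs.le (by linarith)) hD1.le
  have hρ2 : 0 ≤ μ * s * ((k : ℝ) + α - 1) / ((k : ℝ) * (1 + ω + lam)) :=
    div_nonneg (by positivity) (by positivity)
  have hρ3 : 0 ≤ μ * s * ((k : ℝ) + α - 1) / ((α - 1) * (1 + 1 / ω + 1 / σ)) :=
    div_nonneg (by positivity) (by positivity)
  have hρ0 : 0 ≤ ρ := le_min (le_min hρ1 hρ2) hρ3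
  have hρle1 : ρ ≤ μ * s * (1 - s * L) / (1 + μ * s * (s * L - 1 + 1 / lam + σ)) :=
    (min_le_left _ _).trans (min_le_left _ _)
  have hρle2 : ρ ≤ μ * s * ((k : ℝ) + α - 1) / ((k : ℝ) * (1 + ω + lam)) :=
    (min_le_left _ _).trans (min_le_right _ _)
  have hρle3 : ρ ≤ μ * s * ((k : ℝ) + α - 1) / ((α - 1) * (1 + 1 / ω + 1 / σ)) :=
    min_le_right _ _
  -- term 1 (gradient-mapping term)
  have key1 : ρ * (1 + μ * s * (s * L - 1 + 1 / lam + σ)) ≤ μ * s * (1 - s * L) :=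
    (le_div_iff₀ hD1).mp hρle1
  have hμsC : μ * s * (1 + 1 / lam + σ + (1 - μ * s * (2 - s * L)) / (μ * s))
      = 1 + μ * s * (s * L - 1 + 1 / lam + σ) := by
    field_simp; ring
  have h1 : ρ * (((k : ℝ) + α - 1) ^ 2 / 2
        * (1 + 1 / lam + σ + (1 - μ * s * (2 - s * L)) / (μ * s))
        * ‖s • Gs (x k)‖ ^ 2)
      ≤ (1 - s * L) * ((k : ℝ) + α - 1) ^ 2 / 2 * ‖s • Gs (x k)‖ ^ 2 := by
    rw [← mul_le_mul_iff_right₀ hμs]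
    have hex : μ * s * (ρ * (((k : ℝ) + α - 1) ^ 2 / 2
          * (1 + 1 / lam + σ + (1 - μ * s * (2 - s * L)) / (μ * s))
          * ‖s • Gs (x k)‖ ^ 2))
        = ρ * (μ * s * (1 + 1 / lam + σ + (1 - μ * s * (2 - s * L)) / (μ * s)))
          * (((k : ℝ) + α - 1) ^ 2 / 2 * ‖s • Gs (x k)‖ ^ 2) := by ring
    rw [hex, hμsC]
    have h := mul_le_mul_of_nonneg_right key1
      (show (0:ℝ) ≤ ((k : ℝ) + α - 1) ^ 2 / 2 * ‖s • Gs (x k)‖ ^ 2 by positivity)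
    linarith [h]
  -- term 2
  have h2 : ρ * ((k : ℝ) ^ 2 / 2 * (1 + ω + lam) * ‖x k - y k‖ ^ 2)
      ≤ μ * s * (k : ℝ) * ((k : ℝ) + α - 1) / 2 * ‖x k - y k‖ ^ 2 := by
    rcases Nat.eq_zero_or_pos k with hk | hk
    · subst hk; simp
    · have hkpos : (0:ℝ) < (k:ℝ) := by exact_mod_cast hk
      have hden : (0:ℝ) < (k : ℝ) * (1 + ω + lam) := by positivity
      have key2 : ρ * ((k : ℝ) * (1 + ω + lam)) ≤ μ * s * ((k : ℝ) + α - 1) :=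
        (le_div_iff₀ hden).mp hρle2
      have h := mul_le_mul_of_nonneg_right key2
        (mul_nonneg hk0 hb)
      linarith [h]
  -- term 3
  have hden3 : (0:ℝ) < (α - 1) * (1 + 1 / ω + 1 / σ) := by positivity
  have key3 : ρ * ((α - 1) * (1 + 1 / ω + 1 / σ)) ≤ μ * s * ((k : ℝ) + α - 1) :=
    (le_div_iff₀ hden3).mp hρle3
  have h3 : ρ * ((α - 1) ^ 2 / 2 * (1 + 1 / ω + 1 / σ) * ‖x k - xstar‖ ^ 2)
      ≤ μ * s * (α - 1) * ((k : ℝ) + α - 1) / 2 * ‖x k - xstar‖ ^ 2 := by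
    have h := mul_le_mul_of_nonneg_right key3
      (mul_nonneg (by linarith : (0:ℝ) ≤ α - 1) hc)
    linarith [h]
  have hd := hdec k
  have hu := hub k ω lam σ hω hlam hσ
  have hρE : ρ * E (k + 1) ≤ ρ * ((k : ℝ) ^ 2 / 2 * (1 + ω + lam) * ‖x k - y k‖ ^ 2
        + (α - 1) ^ 2 / 2 * (1 + 1 / ω + 1 / σ) * ‖x k - xstar‖ ^ 2
        + ((k : ℝ) + α - 1) ^ 2 / 2
            * (1 + 1 / lam + σ + (1 - μ * s * (2 - s * L)) / (μ * s))
            * ‖s • Gs (x k)‖ ^ 2) :=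
    mul_le_mul_of_nonneg_left hu hρ0
  linarith [hd, hρE, h1, h2, h3]
end

section
/- Let F = f + g where f : H → ℝ is μ-strongly convex and L-smooth (L ≥ μ > 0) and g is proper convex lsc. Run M-APM with α ≥ 3, 0 < s < 1/L, and x_0 = y_0. Then for every k ≥ k_α := ⌈α-1⌉, F(y_k) - F* ≤ ((α-1)²‖x_0 - x*‖²)/(2sk(k+α-1)) · (1+ρ)^{-(k - k_α)}, where ρ ≥ min{ μs(1-sL)/(1+μs(sL+2)), μs/2 }. -/
set_option linter.unusedSectionVars false
set_option maxHeartbeats 1000000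

open Filter Set
open scoped RealInnerProductSpace Topology

section mapmHelpers
variable {H : Type*} [NormedAddCommGroup H] [InnerProductSpace ℝ H] [CompleteSpace H]

private lemma nsq (v : H) : ‖v‖^2 = ⟪v, v⟫ := (real_inner_self_eq_norm_sq v).symm

private lemma idA (t : ℝ) (X Z Y P : H) :
    t*(t-1)*(‖X-Y‖^2-‖Z-Y‖^2) + t*(‖X-P‖^2-‖Z-P‖^2)
      = ‖t•(X-P)-(t-1)•(Y-P)‖^2 - ‖t•(Z-P)-(t-1)•(Y-P)‖^2 := by
  simp only [nsq, inner_sub_left, inner_sub_right, real_inner_smul_left, real_inner_smul_right,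
    real_inner_comm X Y, real_inner_comm X P, real_inner_comm Z Y, real_inner_comm Z P,
    real_inner_comm Y P, real_inner_comm X Z]
  ring

private lemma idC (t : ℝ) (u w : H) :
    ‖t•u - (t-1)•w‖^2 = t*‖u‖^2 - (t-1)*‖w‖^2 + t*(t-1)*‖u-w‖^2 := by
  simp only [nsq, inner_sub_left, inner_sub_right, real_inner_smul_left, real_inner_smul_right,
    real_inner_comm u w]
  ring

private lemma mapmLineDeriv (f : H → ℝ) (f' : H → H) (hdiff : ∀ w, HasGradientAt f (f' w) w)
    (w d : H) (τ : ℝ) :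
    HasDerivAt (fun r : ℝ => f (w + r • d)) ⟪f' (w + τ • d), d⟫ τ := by
  have hc : HasDerivAt (fun r : ℝ => w + r • d) d τ := by
    simpa using ((hasDerivAt_id τ).smul_const d).const_add w
  have hF := hasGradientAt_iff_hasFDerivAt.mp (hdiff (w + τ • d))
  exact hF.comp_hasDerivAt τ hc

private lemma strongGrad (f : H → ℝ) (f' : H → H) (μ : ℝ)
    (hf : StrongConvexOn Set.univ μ f) (hdiff : ∀ w, HasGradientAt f (f' w) w) (p q : H) :
    f p + ⟪f' p, q - p⟫ + μ/2*‖q-p‖^2 ≤ f q := by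
  set D : ℝ := ⟪f' p, q - p⟫ with hD
  have hφ : HasDerivAt (fun r : ℝ => f (p + r • (q - p))) D 0 := by
    have := mapmLineDeriv f f' hdiff p (q - p) 0
    simpa using this
  have hslope : Tendsto (fun r : ℝ => (f (p + r • (q - p)) - f p) / r) (𝓝[>] (0:ℝ)) (𝓝 D) := by
    have h1 := hasDerivAt_iff_tendsto_slope.mp hφ
    have h2 : Tendsto (slope (fun r : ℝ => f (p + r • (q - p))) 0) (𝓝[>] (0:ℝ)) (𝓝 D) :=
      h1.mono_left (nhdsWithin_mono 0 (fun r hr => ne_of_gt hr))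
    refine h2.congr' ?_
    filter_upwards [self_mem_nhdsWithin] with r hr
    simp [slope_def_field]
  have hRHS : Tendsto (fun r : ℝ => f q - f p - (1-r)*(μ/2*‖q-p‖^2)) (𝓝[>] (0:ℝ))
      (𝓝 (f q - f p - μ/2*‖q-p‖^2)) := by
    have hc : ContinuousAt (fun r : ℝ => f q - f p - (1-r)*(μ/2*‖q-p‖^2)) 0 := by fun_prop
    have := hc.tendsto.mono_left (nhdsWithin_le_nhds (s := Ioi (0:ℝ)))
    simpa using this
  have hle : D ≤ f q - f p - μ/2*‖q-p‖^2 := by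
    refine le_of_tendsto_of_tendsto hslope hRHS ?_
    filter_upwards [Ioo_mem_nhdsGT_of_mem (Set.mem_Ico.mpr ⟨le_refl (0:ℝ), zero_lt_one⟩)]
      with r hr
    obtain ⟨hr0, hr1⟩ := hr
    have hcvx := hf.2 (Set.mem_univ q) (Set.mem_univ p) (le_of_lt hr0)
      (by linarith : (0:ℝ) ≤ 1 - r) (by ring)
    have hpt : r • q + (1-r) • p = p + r • (q - p) := by module
    rw [hpt] at hcvx
    simp only [smul_eq_mul] at hcvx
    rw [div_le_iff₀ hr0]
    nlinarith [hcvx]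
  linarith

private lemma proxSubgrad (g : H → ℝ) (s : ℝ) (hs : 0 < s)
    (hg : ConvexOn ℝ Set.univ g) (prox : H → H)
    (hprox : ∀ w, IsMinOn (fun u => g u + 1 / (2 * s) * ‖u - w‖ ^ 2) Set.univ (prox w))
    (w u : H) :
    g (prox w) + (1/s) * ⟪w - prox w, u - prox w⟫ ≤ g u := by
  set p : H := prox w with hp
  have key : ∀ r : ℝ, 0 < r → r < 1 →
      (1/s) * ⟪w - p, u - p⟫ ≤ g u - g p + r * (1/(2*s) * ‖u - p‖^2) := by
    intro r hr0 hr1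
    have hmin := isMinOn_iff.mp (hprox w) (r • u + (1-r) • p) (Set.mem_univ _)
    have hcvx := hg.2 (Set.mem_univ u) (Set.mem_univ p) (le_of_lt hr0)
      (by linarith : (0:ℝ) ≤ 1 - r) (by ring)
    simp only [smul_eq_mul] at hcvx
    have hexp : ‖(r • u + (1-r) • p) - w‖^2
        = ‖p - w‖^2 + 2*r*⟪p - w, u - p⟫ + r^2*‖u - p‖^2 := by
      have hvec : (r • u + (1-r) • p) - w = (p - w) + r • (u - p) := by module
      rw [hvec]
      simp only [nsq, inner_add_left, inner_add_right, real_inner_smul_left,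
        real_inner_smul_right, real_inner_comm (p - w) (u - p)]
      ring
    rw [hexp] at hmin
    have hhalf : (1:ℝ)/(2*s) = (1/2) * (1/s) := by
      field_simp
    rw [hhalf] at hmin
    have h1 : 0 ≤ r * (g u - g p) + (1/2)*(1/s) * (2*r*⟪p - w, u - p⟫ + r^2*‖u - p‖^2) := by
      nlinarith [hcvx, hmin]
    have h2' : 0 ≤ r * ((g u - g p) + (1/s) * ⟪p - w, u - p⟫ + r * ((1/2)*(1/s) * ‖u - p‖^2)) := by
      nlinarith [h1]
    have h2 : 0 ≤ (g u - g p) + (1/s) * ⟪p - w, u - p⟫ + r * ((1/2)*(1/s) * ‖u - p‖^2) := by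
      by_contra hX
      push_neg at hX
      nlinarith [h2', mul_pos hr0 (neg_pos.mpr hX)]
    have hflip : ⟪w - p, u - p⟫ = -⟪p - w, u - p⟫ := by
      rw [show w - p = -(p - w) by abel, inner_neg_left]
    rw [hflip, hhalf]
    linarith
  have hLHS : Tendsto (fun _ : ℝ => (1/s) * ⟪w - p, u - p⟫) (𝓝[>] (0:ℝ))
      (𝓝 ((1/s) * ⟪w - p, u - p⟫)) := tendsto_const_nhds
  have hRHS : Tendsto (fun r : ℝ => g u - g p + r * (1/(2*s) * ‖u - p‖^2)) (𝓝[>] (0:ℝ))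
      (𝓝 (g u - g p)) := by
    have hc : ContinuousAt (fun r : ℝ => g u - g p + r * (1/(2*s) * ‖u - p‖^2)) 0 := by fun_prop
    have := hc.tendsto.mono_left (nhdsWithin_le_nhds (s := Ioi (0:ℝ)))
    simpa using this
  have := le_of_tendsto_of_tendsto hLHS hRHS (by
    filter_upwards [Ioo_mem_nhdsGT_of_mem (Set.mem_Ico.mpr ⟨le_refl (0:ℝ), zero_lt_one⟩)]
      with r hr
    exact key r hr.1 hr.2)
  linarith

private lemma descentLemma (f : H → ℝ) (f' : H → H) (L : ℝ) (hL : 0 < L)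
    (hdiff : ∀ w, HasGradientAt f (f' w) w)
    (hlip : ∀ w v, ‖f' w - f' v‖ ≤ L * ‖w - v‖) (p q : H) :
    f q ≤ f p + ⟪f' p, q - p⟫ + L/2 * ‖q - p‖^2 := by
  set d : H := q - p with hd
  set φ' : ℝ → ℝ := fun r => ⟪f' (p + r • d), d⟫ with hφ'
  have hderiv : ∀ r ∈ Set.uIcc (0:ℝ) 1, HasDerivAt (fun r : ℝ => f (p + r • d)) (φ' r) r :=
    fun r _ => mapmLineDeriv f f' hdiff p d r
  have hf'cont : Continuous f' := by
    have : LipschitzWith (Real.toNNReal L) f' := by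
      rw [lipschitzWith_iff_norm_sub_le]
      intro a b
      simpa [Real.coe_toNNReal L hL.le] using hlip a b
    exact this.continuous
  have hcont : Continuous φ' := by
    apply Continuous.inner
    · exact hf'cont.comp (by continuity)
    · exact continuous_const
  have hInt : IntervalIntegrable φ' MeasureTheory.volume 0 1 := hcont.intervalIntegrable 0 1
  have hFTC : ∫ r in (0:ℝ)..1, φ' r = f (p + (1:ℝ) • d) - f (p + (0:ℝ) • d) :=
    intervalIntegral.integral_eq_sub_of_hasDerivAt hderiv hInt
  have hcont2 : Continuous (fun r : ℝ => ⟪f' p, d⟫ + L*‖d‖^2*r) := by continuity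
  have hmono : ∫ r in (0:ℝ)..1, φ' r ≤ ∫ r in (0:ℝ)..1, (⟪f' p, d⟫ + L*‖d‖^2*r) := by
    apply intervalIntegral.integral_mono_on zero_le_one hInt (hcont2.intervalIntegrable 0 1)
    intro r hr
    obtain ⟨hr0, hr1⟩ := hr
    have h1 : φ' r - ⟪f' p, d⟫ = ⟪f' (p + r • d) - f' p, d⟫ := by
      simp [hφ', inner_sub_left]
    have h2 : ⟪f' (p + r • d) - f' p, d⟫ ≤ ‖f' (p + r • d) - f' p‖ * ‖d‖ :=
      real_inner_le_norm _ _
    have h3 : ‖f' (p + r • d) - f' p‖ ≤ L * (r * ‖d‖) := by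
      have := hlip (p + r • d) p
      simpa [norm_smul, abs_of_nonneg hr0] using this
    have h4 : ‖f' (p + r • d) - f' p‖ * ‖d‖ ≤ L * (r * ‖d‖) * ‖d‖ :=
      mul_le_mul_of_nonneg_right h3 (norm_nonneg d)
    nlinarith [h1, h2, h4]
  have hval : ∫ r in (0:ℝ)..1, (⟪f' p, d⟫ + L*‖d‖^2*r) = ⟪f' p, d⟫ + L*‖d‖^2/2 := by
    rw [intervalIntegral.integral_add ((continuous_const (y := (⟪f' p, d⟫ : ℝ))).intervalIntegrable 0 1)
      ((by continuity : Continuous (fun r : ℝ => L*‖d‖^2*r)).intervalIntegrable 0 1)]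
    rw [intervalIntegral.integral_const_mul]
    simp [integral_id]
    ring
  have hq : p + (1:ℝ) • d = q := by simp [hd]
  have hp : p + (0:ℝ) • d = p := by simp
  rw [hq, hp] at hFTC
  rw [hval, hFTC] at hmono
  linarith [hmono]


private lemma sqTri (a b c : H) : ‖a - c‖^2 ≤ 2*‖b - a‖^2 + 2*‖b - c‖^2 := by
  have h := norm_sub_le_norm_sub_add_norm_sub a b c
  have hr : ‖a - b‖ = ‖b - a‖ := norm_sub_rev _ _
  rw [hr] at h
  nlinarith [h, sq_nonneg (‖b - a‖ - ‖b - c‖),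
    mul_le_mul h h (norm_nonneg _) (by positivity)]

private lemma realZa (s L μ Z aa bb W2 : ℝ) (hs : 0 < s) (hμ : 0 < μ)
    (h2s : 2*s*Z ≤ (bb^2 - W2) - (1-s*L)*aa^2 - s*μ*bb^2)
    (hW2ge : (bb - aa)^2 ≤ W2) :
    2*μ*s^2*Z ≤ (1 - μ*s*(2-s*L))*aa^2 := by
  have hms : (0:ℝ) ≤ μ*s := (mul_pos hμ hs).le
  have m1 := mul_le_mul_of_nonneg_left h2s hms
  have m2 := mul_le_mul_of_nonneg_left hW2ge hms
  nlinarith [m1, m2, sq_nonneg (aa - μ*s*bb)]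

private lemma realCoef (s L μ ρ Z a2 : ℝ) (hμs : 0 < μ*s) (hρ0 : 0 ≤ ρ)
    (hρ1 : ρ*(1+μ*s*(s*L)) ≤ μ*s*(1-s*L)) (ha : 0 ≤ a2)
    (hZa : 2*μ*s^2*Z ≤ (1-μ*s*(2-s*L))*a2) :
    2*s*ρ*Z + 2*ρ*a2 ≤ (1-s*L)*a2 := by
  have c1 := mul_le_mul_of_nonneg_left hZa hρ0
  have c2 := mul_le_mul_of_nonneg_right hρ1 ha
  have c3 : μ*s*(2*s*ρ*Z + 2*ρ*a2) ≤ μ*s*((1-s*L)*a2) := by nlinarith [c1, c2]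
  exact le_of_mul_le_mul_left c3 hμs

private lemma realMaster (s L μ ρ Tt TT P P' Z a2 d2 b2 q2 W2 Y2 V V' : ℝ)
    (hs : 0 < s) (hμs : 0 < μ*s)
    (hρ0 : 0 ≤ ρ) (hρ1 : ρ*(1+μ*s*(s*L)) ≤ μ*s*(1-s*L)) (hρ2 : 2*ρ ≤ μ*s)
    (ht : 1 ≤ Tt) (hTT : Tt*(Tt-1) ≤ TT)
    (hstep : 2*s*(Tt^2*Z) + V' ≤ 2*s*(Tt*(Tt-1)*P) + V - (1-s*L)*(Tt^2*a2)
      - s*μ*(Tt*(Tt-1)*d2 + Tt*b2))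
    (hZa : 2*μ*s^2*Z ≤ (1 - μ*s*(2-s*L))*a2)
    (hPZ : P' ≤ Z) (hP0 : 0 ≤ P)
    (hV' : V' = Tt*W2 - (Tt-1)*Y2 + Tt*(Tt-1)*q2)
    (hW : W2 ≤ 2*a2 + 2*b2) (hq : q2 ≤ 2*a2 + 2*d2)
    (hY : 0 ≤ Y2) (ha : 0 ≤ a2) (hb : 0 ≤ b2) (hd : 0 ≤ d2) :
    (1+ρ)*(2*s*(Tt^2*P') + V') ≤ 2*s*(TT*P) + V := by
  have ht0 : (0:ℝ) ≤ Tt := by linarith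
  have ht1' : (0:ℝ) ≤ Tt - 1 := by linarith
  have htt0 : (0:ℝ) ≤ Tt*(Tt-1) := mul_nonneg ht0 ht1'
  have h2s0 : (0:ℝ) ≤ 2*s := by linarith
  have hc1 : (0:ℝ) ≤ 2*s*Tt^2 := mul_nonneg h2s0 (sq_nonneg Tt)
  have cA : (2*s*Tt^2)*P' ≤ (2*s*Tt^2)*Z := mul_le_mul_of_nonneg_left hPZ hc1
  have cB : (ρ*(2*s*Tt^2))*P' ≤ (ρ*(2*s*Tt^2))*Z :=
    mul_le_mul_of_nonneg_left hPZ (mul_nonneg hρ0 hc1)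
  have hV'le : V' ≤ Tt*W2 + Tt*(Tt-1)*q2 := by
    have := mul_nonneg ht1' hY
    linarith [hV'.le, hV'.ge]
  have cC : ρ*V' ≤ ρ*(Tt*W2 + Tt*(Tt-1)*q2) := mul_le_mul_of_nonneg_left hV'le hρ0
  have cD : (ρ*Tt)*W2 ≤ (ρ*Tt)*(2*a2 + 2*b2) :=
    mul_le_mul_of_nonneg_left hW (mul_nonneg hρ0 ht0)
  have cE : (ρ*(Tt*(Tt-1)))*q2 ≤ (ρ*(Tt*(Tt-1)))*(2*a2 + 2*d2) :=
    mul_le_mul_of_nonneg_left hq (mul_nonneg hρ0 htt0)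
  have cF : (2*ρ)*(Tt*b2) ≤ (μ*s)*(Tt*b2) :=
    mul_le_mul_of_nonneg_right hρ2 (mul_nonneg ht0 hb)
  have cG : (2*ρ)*(Tt*(Tt-1)*d2) ≤ (μ*s)*(Tt*(Tt-1)*d2) :=
    mul_le_mul_of_nonneg_right hρ2 (mul_nonneg htt0 hd)
  have hcoef := realCoef s L μ ρ Z a2 hμs hρ0 hρ1 ha hZa
  have cH : Tt^2*(2*s*ρ*Z + 2*ρ*a2) ≤ Tt^2*((1-s*L)*a2) :=
    mul_le_mul_of_nonneg_left hcoef (sq_nonneg Tt)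
  have cI : (0:ℝ) ≤ 2*s*((TT - Tt*(Tt-1))*P) :=
    mul_nonneg h2s0 (mul_nonneg (by linarith) hP0)
  nlinarith [hstep, cA, cB, cC, cD, cE, cF, cG, cH, cI]

private lemma keyIneq (n a : ℝ) (hn : 0 ≤ n) (ha : 3 ≤ a) : n*(n+a-1) ≤ (n+a-2)^2 := by
  nlinarith

private lemma divIneq (n a : ℝ) (hn : 0 ≤ n) (ha : 3 ≤ a) :
    ((n+a-1)/(a-1))*((n+a-1)/(a-1) - 1) ≤ ((n+a-2)/(a-1))^2 := by
  have ha1 : (0:ℝ) < a - 1 := by linarith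
  have h1 : (n+a-1)/(a-1) - 1 = n/(a-1) := by field_simp; ring
  rw [h1, div_mul_div_comm, div_pow, div_le_div_iff₀ (by positivity) (by positivity)]
  have hkey := keyIneq n a hn ha
  nlinarith [mul_le_mul_of_nonneg_right hkey (sq_nonneg (a-1)), sq_nonneg (a-1)]

end mapmHelpers

/-- Theorem 1: linear convergence of M-APM under strong convexity. -/
theorem mapm_linear_convergence
    {H : Type*} [NormedAddCommGroup H] [InnerProductSpace ℝ H] [CompleteSpace H]
    (f : H → ℝ) (f' : H → H) (g : H → ℝ) (L μ s α : ℝ)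
    (hα : 3 ≤ α) (hL : 0 < L) (hμ : 0 < μ) (hμL : μ ≤ L) (hs : 0 < s) (hsL : s < 1 / L)
    (hf : StrongConvexOn Set.univ μ f)
    (hdiff : ∀ w, HasGradientAt f (f' w) w)
    (hlip : ∀ w v, ‖f' w - f' v‖ ≤ L * ‖w - v‖)
    (hg : ConvexOn ℝ Set.univ g) (hg_lsc : LowerSemicontinuous g)
    (prox : H → H)
    (hprox : ∀ w, IsMinOn (fun u => g u + 1 / (2 * s) * ‖u - w‖ ^ 2) Set.univ (prox w))
    (F : H → ℝ) (hF : ∀ w, F w = f w + g w)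
    (Gs : H → H) (hGs : ∀ w, Gs w = (1 / s) • (w - prox (w - s • f' w)))
    (xstar : H) (hmin : IsMinOn F Set.univ xstar)
    (x y z : ℕ → H)
    (hz : ∀ k : ℕ, z k = prox (x k - s • f' (x k)))
    (hy : ∀ k : ℕ, y (k + 1) = if F (z k) ≤ F (y k) then z k else y k)
    (hx : ∀ k : ℕ, x (k + 1) = y (k + 1) + (((k : ℝ)) / ((k : ℝ) + α)) • (y (k + 1) - y k)
        + (((k : ℝ) + α - 1) / ((k : ℝ) + α)) • (z k - y (k + 1)))
    (hinit : x 0 = y 0) :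
    ∃ ρ : ℝ,
      min (μ * s * (1 - s * L) / (1 + μ * s * (s * L + 2))) (μ * s / 2) ≤ ρ ∧
      ∀ k : ℕ, ⌈α - 1⌉₊ ≤ k →
        F (y k) - F xstar ≤
          (α - 1) ^ 2 * ‖x 0 - xstar‖ ^ 2 / (2 * s * (k : ℝ) * ((k : ℝ) + α - 1))
            * ((1 + ρ) ^ (k - ⌈α - 1⌉₊))⁻¹ := by
  -- basic scalar facts
  have hα1 : (0:ℝ) < α - 1 := by linarith
  have hαne : (α:ℝ) - 1 ≠ 0 := ne_of_gt hα1
  have hsL1 : s * L < 1 := by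
    have := (lt_div_iff₀ hL).mp hsL
    linarith
  have hμs : 0 < μ * s := mul_pos hμ hs
  have hδpos : 0 < 1 + μ*s*(s*L+2) := by nlinarith [mul_pos hs hL]
  obtain ⟨ρ, hρdef⟩ : ∃ ρ : ℝ, ρ = min (μ * s * (1 - s * L) / (1 + μ * s * (s * L + 2))) (μ * s / 2) :=
    ⟨_, rfl⟩
  have hρa : 0 ≤ μ*s*(1-s*L)/(1+μ*s*(s*L+2)) := by
    apply div_nonneg (by nlinarith) (le_of_lt hδpos)
  have hρ0 : 0 ≤ ρ := by rw [hρdef]; exact le_min hρa (by positivity)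
  have hρ2 : 2*ρ ≤ μ*s := by
    have := min_le_right (μ * s * (1 - s * L) / (1 + μ * s * (s * L + 2))) (μ * s / 2)
    rw [← hρdef] at this
    linarith
  have hρ1 : ρ*(1+μ*s*(s*L)) ≤ μ*s*(1-s*L) := by
    have h1 : ρ ≤ μ*s*(1-s*L)/(1+μ*s*(s*L+2)) := by
      rw [hρdef]
      exact min_le_left _ _
    have h2 : ρ * (1+μ*s*(s*L+2)) ≤ (μ*s*(1-s*L)/(1+μ*s*(s*L+2))) * (1+μ*s*(s*L+2)) :=
      mul_le_mul_of_nonneg_right h1 (le_of_lt hδpos)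
    rw [div_mul_cancel₀ _ (ne_of_gt hδpos)] at h2
    nlinarith [hρ0, hμs]
  -- min of F
  have hFy : ∀ w, F xstar ≤ F w := fun w => isMinOn_iff.mp hmin w (Set.mem_univ w)
  have hyz : ∀ k : ℕ, F (y (k+1)) ≤ F (z k) := by
    intro k
    rw [hy k]
    split_ifs with h
    · exact le_refl _
    · exact le_of_not_ge h
  -- the sequences t and v
  obtain ⟨t, htdef⟩ : ∃ t : ℕ → ℝ, ∀ k, t k = ((k:ℝ)+α-1)/(α-1) := ⟨_, fun k => rfl⟩
  obtain ⟨v, hvdef⟩ : ∃ v : ℕ → H, ∀ k,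
      v k = (((k:ℝ)+α-1)/(α-1)) • x k - ((((k:ℝ)+α-1)/(α-1)) - 1) • y k := ⟨_, fun k => rfl⟩
  have ht1 : ∀ k, 1 ≤ t k := by
    intro k
    rw [htdef k, le_div_iff₀ hα1]
    have := Nat.cast_nonneg (α := ℝ) k
    linarith
  have hv0 : v 0 = x 0 := by
    have e : ((((0:ℕ):ℝ)+α-1)/(α-1)) = 1 := by
      rw [show (((0:ℕ):ℝ)+α-1) = α - 1 by push_cast; ring]
      exact div_self hαne
    rw [hvdef 0, e]
    simp
  have hvrec : ∀ k : ℕ, v (k+1) = t k • z k - (t k - 1) • y k := by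
    intro k
    have hne1 : ((k:ℝ) + α) ≠ 0 := by
      have := Nat.cast_nonneg (α := ℝ) k
      positivity
    rw [hvdef (k+1), hx k, htdef k]
    push_cast
    match_scalars
    · field_simp
      ring
    · field_simp
      ring
    · field_simp
      ring
  -- fundamental prox-gradient inequality (scaled by 2s)
  have hfund2 : ∀ (k:ℕ) (u : H), 2*s*(F (z k)) ≤ 2*s*(F u)
      + (‖x k - u‖^2 - ‖z k - u‖^2) - (1-s*L)*‖x k - z k‖^2 - s*μ*‖x k - u‖^2 := by
    intro k u
    have h1 := strongGrad f f' μ hf hdiff (x k) u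
    have h2 := descentLemma f f' L hL hdiff hlip (x k) (z k)
    have h3 := proxSubgrad g s hs hg prox hprox (x k - s • f' (x k)) u
    rw [← hz k] at h3
    have hI3 : ⟪(x k - s • f' (x k)) - z k, u - z k⟫
        = ⟪x k - z k, u - z k⟫ - s*⟪f' (x k), u - x k⟫ + s*⟪f' (x k), z k - x k⟫ := by
      simp only [inner_sub_left, inner_sub_right, real_inner_smul_left]
      ring
    have hA : 2*⟪x k - z k, u - z k⟫ = ‖x k - z k‖^2 + ‖z k - u‖^2 - ‖x k - u‖^2 := by
      have h4 := norm_sub_sq_real (x := x k - z k) (y := u - z k)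
      rw [show (x k - z k) - (u - z k) = x k - u by abel] at h4
      rw [show ‖u - z k‖ = ‖z k - u‖ from norm_sub_rev _ _] at h4
      rw [nsq (x k - z k), nsq (z k - u)] at *
      linarith [h4]
    have h3' : s*(g (z k)) + ⟪(x k - s • f' (x k)) - z k, u - z k⟫ ≤ s*(g u) := by
      have hmul := mul_le_mul_of_nonneg_left h3 hs.le
      have e : s*(g (z k) + (1/s)*⟪(x k - s • f' (x k)) - z k, u - z k⟫)
          = s*(g (z k)) + ⟪(x k - s • f' (x k)) - z k, u - z k⟫ := by
        field_simp
      rw [e] at hmul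
      linarith [hmul]
    have hrev1 : ‖u - x k‖ = ‖x k - u‖ := norm_sub_rev _ _
    have hrev2 : ‖z k - x k‖ = ‖x k - z k‖ := norm_sub_rev _ _
    rw [hrev1] at h1
    rw [hrev2] at h2
    rw [hF (z k), hF u]
    have m1 := mul_le_mul_of_nonneg_left h1 (by linarith : (0:ℝ) ≤ 2*s)
    have m2 := mul_le_mul_of_nonneg_left h2 (by linarith : (0:ℝ) ≤ 2*s)
    linarith [m1, m2, h3', hI3, hA]
  -- master contraction step
  have hmaster : ∀ (k:ℕ) (TT : ℝ), t k * (t k - 1) ≤ TT → 0 ≤ TT →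
      (1+ρ)*(2*s*((t k)^2*(F (y (k+1)) - F xstar)) + ‖v (k+1) - xstar‖^2)
        ≤ 2*s*(TT*(F (y k) - F xstar)) + ‖v k - xstar‖^2 := by
    intro k TT hTT hTT0
    have htk := ht1 k
    have htk0 : 0 ≤ t k := by linarith
    have htt0 : 0 ≤ t k * (t k - 1) := mul_nonneg htk0 (by linarith)
    -- vector identities
    have hveq1 : v k - xstar = (t k)•(x k - xstar) - (t k - 1)•(y k - xstar) := by
      rw [hvdef k, ← htdef k]
      module
    have hveq2 : v (k+1) - xstar = (t k)•(z k - xstar) - (t k - 1)•(y k - xstar) := by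
      rw [hvrec k]
      module
    have hida : t k*(t k-1)*(‖x k - y k‖^2-‖z k - y k‖^2) + t k*(‖x k - xstar‖^2-‖z k - xstar‖^2)
        = ‖v k - xstar‖^2 - ‖v (k+1) - xstar‖^2 := by
      rw [hveq1, hveq2]
      exact idA (t k) (x k) (z k) (y k) xstar
    have hV'id : ‖v (k+1) - xstar‖^2
        = (t k)*‖z k - xstar‖^2 - ((t k)-1)*‖y k - xstar‖^2 + (t k)*((t k)-1)*‖z k - y k‖^2 := by
      rw [hveq2]
      have := idC (t k) (z k - xstar) (y k - xstar)
      rw [show (z k - xstar) - (y k - xstar) = z k - y k by abel] at this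
      exact this
    -- step inequality
    have hy' := hfund2 k (y k)
    have hs' := hfund2 k xstar
    have m1 := mul_le_mul_of_nonneg_left hy' htt0
    have m2 := mul_le_mul_of_nonneg_left hs' htk0
    have hstepk : 2*s*((t k)^2*(F (z k) - F xstar)) + ‖v (k+1) - xstar‖^2
        ≤ 2*s*((t k)*((t k)-1)*(F (y k) - F xstar)) + ‖v k - xstar‖^2
          - (1-s*L)*((t k)^2*‖x k - z k‖^2)
          - s*μ*((t k)*((t k)-1)*‖x k - y k‖^2 + (t k)*‖x k - xstar‖^2) := by
      linarith only [m1, m2, hida]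
    -- bound Z by a2
    have htri : |‖x k - xstar‖ - ‖x k - z k‖| ≤ ‖z k - xstar‖ := by
      have h := abs_norm_sub_norm_le (x k - xstar) (x k - z k)
      rw [show (x k - xstar) - (x k - z k) = z k - xstar by abel] at h
      exact h
    have hW2ge : (‖x k - xstar‖ - ‖x k - z k‖)^2 ≤ ‖z k - xstar‖^2 := by
      rw [← sq_abs]
      exact pow_le_pow_left₀ (abs_nonneg _) htri 2
    have hZa : 2*μ*s^2*(F (z k) - F xstar) ≤ (1 - μ*s*(2 - s*L))*‖x k - z k‖^2 := by
      apply realZa s L μ _ _ (‖x k - xstar‖) _ hs hμ _ hW2ge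
      linarith only [hs']
    have hPZ : F (y (k+1)) - F xstar ≤ F (z k) - F xstar := by linarith only [hyz k]
    have hPk0 : 0 ≤ F (y k) - F xstar := by linarith only [hFy (y k)]
    exact realMaster s L μ ρ (t k) TT (F (y k) - F xstar) (F (y (k+1)) - F xstar)
      (F (z k) - F xstar) (‖x k - z k‖^2) (‖x k - y k‖^2) (‖x k - xstar‖^2)
      (‖z k - y k‖^2) (‖z k - xstar‖^2) (‖y k - xstar‖^2)
      (‖v k - xstar‖^2) (‖v (k+1) - xstar‖^2)
      hs hμs hρ0 hρ1 hρ2 htk hTT hstepk hZa hPZ hPk0 hV'id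
      (sqTri (z k) (x k) xstar) (sqTri (z k) (x k) (y k))
      (sq_nonneg _) (sq_nonneg _) (sq_nonneg _) (sq_nonneg _)
  -- Lyapunov decay by induction
  have hE : ∀ k : ℕ, 1 ≤ k →
      (1+ρ)^k * (2*s*((((k:ℝ)+α-2)/(α-1))^2*(F (y k) - F xstar)) + ‖v k - xstar‖^2)
        ≤ ‖x 0 - xstar‖^2 := by
    intro k hk
    induction k, hk using Nat.le_induction with
    | base =>
      have ht0 : t 0 = 1 := by
        rw [htdef 0, show (((0:ℕ):ℝ)+α-1) = α - 1 by push_cast; ring]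
        exact div_self hαne
      have hm := hmaster 0 0 (by rw [ht0]; norm_num) (le_refl 0)
      rw [ht0, hv0] at hm
      have e1 : ((((1:ℕ)):ℝ)+α-2)/(α-1) = 1 := by
        rw [show ((((1:ℕ)):ℝ)+α-2) = α - 1 by push_cast; ring]
        exact div_self hαne
      rw [e1, pow_one]
      simp only [one_pow] at hm ⊢
      linarith only [hm]
    | succ n hn ih =>
      have hcast : ((((n+1:ℕ)):ℝ)+α-2)/(α-1) = t n := by
        rw [htdef n]
        push_cast
        ring
      rw [hcast]
      have htt : t n * (t n - 1) ≤ (((n:ℝ)+α-2)/(α-1))^2 := by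
        rw [htdef n]
        exact divIneq (n:ℝ) α (Nat.cast_nonneg n) hα
      have hm := hmaster n ((((n:ℝ)+α-2)/(α-1))^2) htt (by positivity)
      have hpow0 : (0:ℝ) ≤ (1+ρ)^n := by positivity
      calc (1+ρ)^(n+1) * (2*s*((t n)^2*(F (y (n+1)) - F xstar)) + ‖v (n+1) - xstar‖^2)
          = (1+ρ)^n * ((1+ρ)*(2*s*((t n)^2*(F (y (n+1)) - F xstar)) + ‖v (n+1) - xstar‖^2)) := by
            ring
        _ ≤ (1+ρ)^n * (2*s*(((((n:ℝ)+α-2)/(α-1))^2)*(F (y n) - F xstar)) + ‖v n - xstar‖^2) :=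
            mul_le_mul_of_nonneg_left hm hpow0
        _ ≤ ‖x 0 - xstar‖^2 := ih
  -- conclusion
  refine ⟨ρ, hρdef.ge, ?_⟩
  intro k hk
  have hceil2 : 2 ≤ ⌈α - 1⌉₊ := by
    have h2 : ((2:ℕ):ℝ) ≤ α - 1 := by push_cast; linarith
    calc (2:ℕ) = ⌈((2:ℕ):ℝ)⌉₊ := by simp
      _ ≤ ⌈α - 1⌉₊ := Nat.ceil_le_ceil h2
  have hk2 : 2 ≤ k := le_trans hceil2 hk
  have hk1 : 1 ≤ k := le_trans one_le_two hk2
  have hkR : (2:ℝ) ≤ (k:ℝ) := by exact_mod_cast hk2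
  have hP0 : 0 ≤ F (y k) - F xstar := by linarith [hFy (y k)]
  have hone : (1:ℝ) ≤ 1 + ρ := by linarith
  have hpowpos : (0:ℝ) < (1+ρ)^(k - ⌈α - 1⌉₊) := by positivity
  have hkα1 : (0:ℝ) < (k:ℝ)+α-1 := by linarith
  have hDpos : (0:ℝ) < 2*s*(k:ℝ)*((k:ℝ)+α-1) := by
    apply mul_pos (mul_pos (by linarith) (by linarith))
    exact hkα1
  rw [← div_eq_mul_inv, div_div, le_div_iff₀ (mul_pos hDpos hpowpos)]
  -- key facts
  have hEk := hE k hk1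
  have hQ0 : (0:ℝ) < ((k:ℝ)+α-2)/(α-1) := by
    apply div_pos (by linarith) hα1
  have h5 : (1+ρ)^k * (2*s*((((k:ℝ)+α-2)/(α-1))^2*(F (y k) - F xstar))) ≤ ‖x 0 - xstar‖^2 := by
    have hB := mul_nonneg (by positivity : (0:ℝ) ≤ (1+ρ)^k) (sq_nonneg ‖v k - xstar‖)
    nlinarith [hEk, hB]
  have key1 : (k:ℝ)*((k:ℝ)+α-1) ≤ ((k:ℝ)+α-2)^2 := keyIneq (k:ℝ) α (Nat.cast_nonneg k) hα
  have key2 : (1+ρ)^(k - ⌈α - 1⌉₊) ≤ (1+ρ)^k := pow_le_pow_right₀ hone (Nat.sub_le _ _)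
  have step0 : 2*s*(k:ℝ)*((k:ℝ)+α-1) * ((1+ρ)^(k - ⌈α - 1⌉₊))
      ≤ 2*s*((k:ℝ)+α-2)^2 * ((1+ρ)^k) := by
    have hkk : 2*s*(k:ℝ)*((k:ℝ)+α-1) ≤ 2*s*((k:ℝ)+α-2)^2 := by
      have := mul_le_mul_of_nonneg_left key1 (by linarith : (0:ℝ) ≤ 2*s)
      linarith only [this]
    apply mul_le_mul hkk key2 (le_of_lt hpowpos) (by positivity)
  have step1 : (F (y k) - F xstar) * (2*s*(k:ℝ)*((k:ℝ)+α-1) * (1+ρ)^(k - ⌈α - 1⌉₊))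
      ≤ (F (y k) - F xstar) * (2*s*((k:ℝ)+α-2)^2 * (1+ρ)^k) :=
    mul_le_mul_of_nonneg_left step0 hP0
  have step2 : (F (y k) - F xstar) * (2*s*((k:ℝ)+α-2)^2 * (1+ρ)^k)
      = (α-1)^2*((1+ρ)^k * (2*s*((((k:ℝ)+α-2)/(α-1))^2*(F (y k) - F xstar)))) := by
    field_simp
  have step3 : (α-1)^2*((1+ρ)^k * (2*s*((((k:ℝ)+α-2)/(α-1))^2*(F (y k) - F xstar))))
      ≤ (α-1)^2*‖x 0 - xstar‖^2 :=
    mul_le_mul_of_nonneg_left h5 (by positivity)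
  linarith only [step1, step2.le, step2.ge, step3]
end

section
/- Let f be μ-strongly convex and L-smooth (0 < μ ≤ L), g proper convex lsc, and run M-APM with α ≥ 3 and s = 1/(2L), x_0 = y_0. Then for all k ≥ ⌈α-1⌉: F(y_k) - F* ≤ ((α-1)² L ‖x_0 - x*‖²)/(k(k+α-1)) · (1 + μ/(4L+5μ))^{-(k - ⌈α-1⌉)}. -/
open RealInnerProductSpace

section MAPMAux

variable {H : Type*} [NormedAddCommGroup H] [InnerProductSpace ℝ H] [CompleteSpace H]

private lemma mapm_aux_nonneg (C D : ℝ) (hD : 0 ≤ D)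
    (key : ∀ t : ℝ, 0 < t → t ≤ 1 → 0 ≤ C + t * D) : 0 ≤ C := by
  by_contra hneg
  push_neg at hneg
  set ε := -C / 2 with hε
  have hεpos : 0 < ε := by rw [hε]; linarith
  have htpos : 0 < min 1 (ε / (D + 1)) := lt_min one_pos (by positivity)
  have h1 := key _ htpos (min_le_left _ _)
  have htD : min 1 (ε / (D + 1)) * D ≤ ε := by
    calc min 1 (ε / (D + 1)) * D ≤ (ε / (D + 1)) * D :=
          mul_le_mul_of_nonneg_right (min_le_right _ _) hD
      _ ≤ ε := by
          rw [div_mul_eq_mul_div, div_le_iff₀ (by linarith : (0:ℝ) < D + 1)]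
          nlinarith
  linarith

private lemma mapm_quad_ineq (q X Y : ℝ) (hq : 0 < q) :
    (q/(2+5*q))*X*Y ≤ (1/4 - (q/(2+5*q))/2 - (q/(2+5*q))/(2*q))*X^2
      + ((q - q/(2+5*q))/2)*Y^2 := by
  have h2 : (0:ℝ) < 2 + 5*q := by linarith
  have key : 4*(X*Y) ≤ 3*X^2 + 2*(1+5*q)*Y^2 := by
    nlinarith [sq_nonneg (3*X - 2*Y), mul_nonneg (sq_nonneg Y) hq.le]
  have c : (0:ℝ) ≤ q/(4*(2+5*q)) := by positivity
  calc (q/(2+5*q))*X*Y = q/(4*(2+5*q)) * (4*(X*Y)) := by field_simp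
    _ ≤ q/(4*(2+5*q)) * (3*X^2 + 2*(1+5*q)*Y^2) := mul_le_mul_of_nonneg_left key c
    _ = (1/4 - (q/(2+5*q))/2 - (q/(2+5*q))/(2*q))*X^2 + ((q - q/(2+5*q))/2)*Y^2 := by
        field_simp; ring

private lemma mapm_final_quad (s μ A Γ N P2 : ℝ) (hs : 0 < s) (hμ : 0 < μ)
    (hA : 0 ≤ A) (hΓ : 0 ≤ Γ) (hN : 0 ≤ N) (hP2 : 2*μ*P2 ≤ Γ^2) :
    (s*μ)/(2+5*(s*μ))*(A*s)*(Γ*N) + (s*μ)/(2+5*(s*μ))*(s*A^2)*P2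
      + ((1+(s*μ)/(2+5*(s*μ)))/2)*(s^2*A^2*Γ^2) + ((s*μ)/(2+5*(s*μ))/2)*N^2
      ≤ (3/4)*(s^2*A^2*Γ^2) + (s*μ/2)*N^2 := by
  have hq0 : 0 < s*μ := by positivity
  have h25 : (0:ℝ) < 2 + 5*(s*μ) := by linarith
  have hquad := mapm_quad_ineq (s*μ) (s*A*Γ) N hq0
  have hP2' : ((s*μ)/(2+5*(s*μ)))*(s*A^2)*P2 ≤ (((s*μ)/(2+5*(s*μ)))/(2*(s*μ)))*(s*A*Γ)^2 := by
    have c : (0:ℝ) ≤ ((s*μ)/(2+5*(s*μ)))*(s*A^2)/(2*μ) := by positivity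
    have h1 := mul_le_mul_of_nonneg_left hP2 c
    calc ((s*μ)/(2+5*(s*μ)))*(s*A^2)*P2
        = (((s*μ)/(2+5*(s*μ)))*(s*A^2)/(2*μ)) * (2*μ*P2) := by field_simp
      _ ≤ (((s*μ)/(2+5*(s*μ)))*(s*A^2)/(2*μ)) * Γ^2 := h1
      _ = (((s*μ)/(2+5*(s*μ)))/(2*(s*μ)))*(s*A*Γ)^2 := by field_simp
  nlinarith [hquad, hP2']

private lemma mapm_line_hasDerivAt (f : H → ℝ) (f' : H → H)
    (hdiff : ∀ w, HasGradientAt f (f' w) w) (x d : H) (t : ℝ) :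
    HasDerivAt (fun t : ℝ => f (x + t • d)) ⟪f' (x + t • d), d⟫ t := by
  have hline : HasDerivAt (fun t : ℝ => x + t • d) d t := by
    simpa using ((hasDerivAt_id t).smul_const d).const_add x
  have h := (hdiff (x + t • d)).hasFDerivAt.comp_hasDerivAt t hline
  simp only [InnerProductSpace.toDual_apply_apply] at h; exact h

private lemma mapm_descent (f : H → ℝ) (f' : H → H) (L : ℝ)
    (hdiff : ∀ w, HasGradientAt f (f' w) w)
    (hlip : ∀ w v, ‖f' w - f' v‖ ≤ L * ‖w - v‖) (x d : H) :
    f (x + d) ≤ f x + ⟪f' x, d⟫ + L / 2 * ‖d‖ ^ 2 := by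
  set ψ : ℝ → ℝ := fun t => f (x + t • d) - t * ⟪f' x, d⟫ - t ^ 2 * (L / 2) * ‖d‖ ^ 2 with hψ
  have hd : ∀ t : ℝ, HasDerivAt ψ (⟪f' (x + t • d), d⟫ - ⟪f' x, d⟫ - t * L * ‖d‖ ^ 2) t := by
    intro t
    have h1 := mapm_line_hasDerivAt f f' hdiff x d t
    have h2 : HasDerivAt (fun t : ℝ => t * ⟪f' x, d⟫) ⟪f' x, d⟫ t := by
      simpa using (hasDerivAt_id t).mul_const (⟪f' x, d⟫)
    have h3 : HasDerivAt (fun t : ℝ => t ^ 2 * (L / 2) * ‖d‖ ^ 2) (t * L * ‖d‖ ^ 2) t := by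
      have := ((hasDerivAt_pow 2 t).mul_const (L / 2)).mul_const (‖d‖ ^ 2)
      exact this.congr_deriv (by rw [show (2:ℕ) - 1 = 1 from rfl]; push_cast; ring)
    exact (h1.sub h2).sub h3
  have hanti : AntitoneOn ψ (Set.Icc 0 1) := by
    apply antitoneOn_of_deriv_nonpos (convex_Icc 0 1)
    · exact fun t _ => ((hd t).continuousAt).continuousWithinAt
    · exact fun t _ => ((hd t).differentiableAt).differentiableWithinAt
    · intro t ht
      rw [interior_Icc] at ht
      rw [(hd t).deriv]
      have hb : ⟪f' (x + t • d) - f' x, d⟫ ≤ L * t * ‖d‖ ^ 2 := by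
        calc ⟪f' (x + t • d) - f' x, d⟫ ≤ ‖f' (x + t • d) - f' x‖ * ‖d‖ :=
              real_inner_le_norm _ _
          _ ≤ L * ‖(x + t • d) - x‖ * ‖d‖ := by
              gcongr; exact hlip _ _
          _ = L * t * ‖d‖ ^ 2 := by
              rw [show (x + t • d) - x = t • d by abel, norm_smul]
              simp [abs_of_pos ht.1]; ring
      rw [inner_sub_left] at hb
      nlinarith [hb]
  have h01 := hanti (Set.mem_Icc.2 ⟨le_refl 0, zero_le_one⟩)
    (Set.mem_Icc.2 ⟨zero_le_one, le_refl 1⟩) zero_le_one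
  simp only [hψ] at h01
  norm_num at h01
  linarith [h01]

private lemma mapm_strong_convex_lower (f : H → ℝ) (f' : H → H) (μ : ℝ)
    (hf : StrongConvexOn Set.univ μ f) (hdiff : ∀ w, HasGradientAt f (f' w) w)
    (x u : H) :
    f x + ⟪f' x, u - x⟫ + μ / 2 * ‖u - x‖ ^ 2 ≤ f u := by
  set d := u - x with hd
  set φ : ℝ → ℝ := fun t => f (x + t • d) with hφ
  have key : ∀ t : ℝ, t ∈ Set.Ioc (0:ℝ) 1 →
      (φ t - φ 0) / t ≤ f u - f x - (1 - t) * (μ / 2) * ‖u - x‖ ^ 2 := by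
    intro t ht
    have h2 := hf.2 (Set.mem_univ x) (Set.mem_univ u) (sub_nonneg.2 ht.2) (le_of_lt ht.1)
      (by ring : (1 - t) + t = 1)
    have hxt : (1 - t) • x + t • u = x + t • d := by
      rw [hd]; module
    rw [hxt] at h2
    have hn : ‖x - u‖ = ‖u - x‖ := norm_sub_rev _ _
    rw [hn] at h2
    simp only [smul_eq_mul] at h2
    have hstep : φ t - φ 0 ≤ t * (f u - f x - (1 - t) * (μ / 2) * ‖u - x‖ ^ 2) := by
      simp only [hφ, zero_smul, add_zero]
      nlinarith [h2]
    rw [div_le_iff₀ ht.1]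
    linarith [hstep]
  have hder := mapm_line_hasDerivAt f f' hdiff x d 0
  simp only [zero_smul, add_zero] at hder
  have hslope : Filter.Tendsto (fun t : ℝ => (φ t - φ 0) / t)
      (nhdsWithin 0 (Set.Ioi 0)) (nhds ⟪f' x, d⟫) := by
    have h1 := hasDerivAt_iff_tendsto_slope.1 hder
    have hmono : nhdsWithin (0:ℝ) (Set.Ioi 0) ≤ nhdsWithin 0 {(0:ℝ)}ᶜ :=
      nhdsWithin_mono 0 (fun t ht => ne_of_gt ht)
    refine (h1.mono_left hmono).congr (fun t => ?_)
    simp [slope, vsub_eq_sub, hφ]; ring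
  have hrhs : Filter.Tendsto (fun t : ℝ => f u - f x - (1 - t) * (μ / 2) * ‖u - x‖ ^ 2)
      (nhdsWithin 0 (Set.Ioi 0)) (nhds (f u - f x - (μ / 2) * ‖u - x‖ ^ 2)) := by
    have h1 : Filter.Tendsto (fun t : ℝ => f u - f x - (1 - t) * (μ / 2) * ‖u - x‖ ^ 2)
        (nhds 0) (nhds (f u - f x - (1 - 0) * (μ / 2) * ‖u - x‖ ^ 2)) := by
      apply Continuous.tendsto
      continuity
    simpa using h1.mono_left nhdsWithin_le_nhds
  have hle : ⟪f' x, d⟫ ≤ f u - f x - (μ / 2) * ‖u - x‖ ^ 2 := by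
    refine le_of_tendsto_of_tendsto hslope hrhs ?_
    filter_upwards [Ioc_mem_nhdsGT_of_mem (Set.left_mem_Ico.2 one_pos)] with t ht
    exact key t ht
  linarith [hle]

private lemma mapm_prox_subgrad (g : H → ℝ) (hg : ConvexOn ℝ Set.univ g) (s : ℝ) (hs : 0 < s)
    (w p : H) (hp : IsMinOn (fun u => g u + 1 / (2 * s) * ‖u - w‖ ^ 2) Set.univ p)
    (u : H) : g p + (1 / s) * ⟪w - p, u - p⟫ ≤ g u := by
  have key : ∀ t : ℝ, 0 < t → t ≤ 1 →
      0 ≤ (g u - g p - (1 / s) * ⟪w - p, u - p⟫) + t * (‖u - p‖ ^ 2 / (2 * s)) := by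
    intro t ht0 ht1
    have hmin := isMinOn_iff.1 hp (p + t • (u - p)) (Set.mem_univ _)
    have hexp : ‖p + t • (u - p) - w‖ ^ 2
        = ‖p - w‖ ^ 2 + 2 * t * ⟪p - w, u - p⟫ + t ^ 2 * ‖u - p‖ ^ 2 := by
      have h1 : p + t • (u - p) - w = (p - w) + t • (u - p) := by abel
      rw [h1, norm_add_sq_real, real_inner_smul_right, norm_smul,
        Real.norm_eq_abs, abs_of_pos ht0]
      ring
    have hconv : g (p + t • (u - p)) ≤ (1 - t) * g p + t * g u := by
      have h2 := hg.2 (Set.mem_univ p) (Set.mem_univ u) (sub_nonneg.2 ht1) (le_of_lt ht0)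
        (by ring : (1 - t) + t = 1)
      have h3 : (1 - t) • p + t • u = p + t • (u - p) := by module
      rw [h3] at h2
      simpa using h2
    rw [hexp] at hmin
    have hip : ⟪p - w, u - p⟫ = -⟪w - p, u - p⟫ := by
      rw [← inner_neg_left]; congr 1; abel
    rw [hip] at hmin
    have hcomb : g p + 1 / (2 * s) * ‖p - w‖ ^ 2 ≤ (1 - t) * g p + t * g u
        + 1 / (2 * s) * (‖p - w‖ ^ 2 + 2 * t * -⟪w - p, u - p⟫ + t ^ 2 * ‖u - p‖ ^ 2) :=
      hmin.trans (by linarith)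
    have ht' : 0 ≤ t * ((g u - g p - (1 / s) * ⟪w - p, u - p⟫)
        + t * (‖u - p‖ ^ 2 / (2 * s))) := by
      have expand : t * ((g u - g p - (1 / s) * ⟪w - p, u - p⟫) + t * (‖u - p‖ ^ 2 / (2 * s)))
          = ((1 - t) * g p + t * g u
          + 1 / (2 * s) * (‖p - w‖ ^ 2 + 2 * t * -⟪w - p, u - p⟫ + t ^ 2 * ‖u - p‖ ^ 2))
          - (g p + 1 / (2 * s) * ‖p - w‖ ^ 2) := by
        field_simp
        ring
      rw [expand]
      linarith
    nlinarith [ht']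
  have h := mapm_aux_nonneg _ _ (by positivity) key
  linarith

private lemma mapm_keyA (f : H → ℝ) (f' : H → H) (g : H → ℝ) (F : H → ℝ) (L μ s : ℝ)
    (hL : 0 < L) (hseq : s = 1 / (2 * L))
    (hf : StrongConvexOn Set.univ μ f)
    (hdiff : ∀ w, HasGradientAt f (f' w) w)
    (hlip : ∀ w v, ‖f' w - f' v‖ ≤ L * ‖w - v‖)
    (hg : ConvexOn ℝ Set.univ g)
    (prox : H → H)
    (hprox : ∀ w, IsMinOn (fun u => g u + 1 / (2 * s) * ‖u - w‖ ^ 2) Set.univ (prox w))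
    (hF : ∀ w, F w = f w + g w)
    (x z G : H) (hzdef : z = prox (x - s • f' x)) (hG : x - z = s • G)
    (u : H) :
    F z ≤ F u + ⟪G, x - u⟫ - (3 * s / 4) * ‖G‖ ^ 2 - μ / 2 * ‖u - x‖ ^ 2 := by
  have hs : 0 < s := by rw [hseq]; positivity
  have h1 : f z ≤ f x + ⟪f' x, z - x⟫ + L / 2 * ‖z - x‖ ^ 2 := by
    have := mapm_descent f f' L hdiff hlip x (z - x)
    simpa using this
  have h2 : f x + ⟪f' x, u - x⟫ + μ / 2 * ‖u - x‖ ^ 2 ≤ f u :=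
    mapm_strong_convex_lower f f' μ hf hdiff x u
  have h3 : g z + ⟪G - f' x, u - z⟫ ≤ g u := by
    have hp := mapm_prox_subgrad g hg s hs (x - s • f' x) z
      (by rw [hzdef]; exact hprox _) u
    have hw : (x - s • f' x) - z = s • (G - f' x) := by
      rw [smul_sub, ← hG]; abel
    rw [hw, real_inner_smul_left] at hp
    have heq : (1 / s) * (s * ⟪G - f' x, u - z⟫) = ⟪G - f' x, u - z⟫ := by
      field_simp
    rw [heq] at hp
    exact hp
  have e1 : ⟪f' x, z - x⟫ - ⟪f' x, u - x⟫ + ⟪f' x, u - z⟫ = 0 := by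
    simp only [inner_sub_right]; ring
  have e2 : ⟪G - f' x, u - z⟫ = ⟪G, u - z⟫ - ⟪f' x, u - z⟫ := by
    rw [inner_sub_left]
  have hzx : z = x - s • G := by rw [← hG]; abel
  have e3 : ⟪G, u - z⟫ = -⟪G, x - u⟫ + s * ‖G‖ ^ 2 := by
    rw [hzx]
    simp only [inner_sub_right, real_inner_smul_right, real_inner_self_eq_norm_sq]
    ring
  have e4 : ‖z - x‖ ^ 2 = s ^ 2 * ‖G‖ ^ 2 := by
    have h5 : z - x = -(s • G) := by rw [hzx]; abel
    rw [h5, norm_neg, norm_smul, Real.norm_eq_abs, abs_of_pos hs]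
    ring
  have e5 : L / 2 * (s ^ 2 * ‖G‖ ^ 2) = s / 4 * ‖G‖ ^ 2 := by
    rw [hseq]; field_simp; ring
  rw [hF z, hF u]
  rw [e4, e5] at h1
  rw [e2, e3] at h3
  linarith

end MAPMAux

set_option maxHeartbeats 1000000 in
/-- Corollary 1: linear convergence of M-APM with step size s = 1/(2L). -/
theorem mapm_linear_convergence_half_step
    {H : Type*} [NormedAddCommGroup H] [InnerProductSpace ℝ H] [CompleteSpace H]
    (f : H → ℝ) (f' : H → H) (g : H → ℝ) (L μ s α : ℝ)
    (hα : 3 ≤ α) (hL : 0 < L) (hμ : 0 < μ) (hμL : μ ≤ L) (hseq : s = 1 / (2 * L))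
    (hf : StrongConvexOn Set.univ μ f)
    (hdiff : ∀ w, HasGradientAt f (f' w) w)
    (hlip : ∀ w v, ‖f' w - f' v‖ ≤ L * ‖w - v‖)
    (hg : ConvexOn ℝ Set.univ g) (hg_lsc : LowerSemicontinuous g)
    (prox : H → H)
    (hprox : ∀ w, IsMinOn (fun u => g u + 1 / (2 * s) * ‖u - w‖ ^ 2) Set.univ (prox w))
    (F : H → ℝ) (hF : ∀ w, F w = f w + g w)
    (Gs : H → H) (hGs : ∀ w, Gs w = (1 / s) • (w - prox (w - s • f' w)))
    (xstar : H) (hmin : IsMinOn F Set.univ xstar)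
    (x y z : ℕ → H)
    (hz : ∀ k : ℕ, z k = prox (x k - s • f' (x k)))
    (hy : ∀ k : ℕ, y (k + 1) = if F (z k) ≤ F (y k) then z k else y k)
    (hx : ∀ k : ℕ, x (k + 1) = y (k + 1) + (((k : ℝ)) / ((k : ℝ) + α)) • (y (k + 1) - y k)
        + (((k : ℝ) + α - 1) / ((k : ℝ) + α)) • (z k - y (k + 1)))
    (hinit : x 0 = y 0) :
    ∀ k : ℕ, ⌈α - 1⌉₊ ≤ k →
      F (y k) - F xstar ≤
        (α - 1) ^ 2 * L * ‖x 0 - xstar‖ ^ 2 / ((k : ℝ) * ((k : ℝ) + α - 1))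
          * ((1 + μ / (4 * L + 5 * μ)) ^ (k - ⌈α - 1⌉₊))⁻¹ := by
  have hs : 0 < s := by rw [hseq]; positivity
  set ρ : ℝ := μ / (4 * L + 5 * μ) with hρdef
  have hρpos : 0 < ρ := by rw [hρdef]; positivity
  have hsμ : 0 < s * μ := by positivity
  have h25 : (0:ℝ) < 2 + 5 * (s * μ) := by linarith
  have hρq : ρ = (s * μ) / (2 + 5 * (s * μ)) := by
    have h4 : (0:ℝ) < 4 * L + 5 * μ := by linarith
    rw [hρdef, div_eq_div_iff h4.ne' h25.ne', hseq]
    field_simp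
    ring
  set w : ℕ → H := fun k => ((k : ℝ) + α - 1) • x k - (k : ℝ) • y k - (α - 1) • xstar
    with hwdef
  set E : ℕ → ℝ := fun k =>
    s * (k : ℝ) * ((k : ℝ) + α - 1) * (F (y k) - F xstar) + 1 / 2 * ‖w k‖ ^ 2 with hEdef
  have hstar : ∀ v, F xstar ≤ F v := fun v => isMinOn_iff.1 hmin v (Set.mem_univ v)
  have hsG : ∀ k : ℕ, x k - z k = s • Gs (x k) := by
    intro k
    rw [hGs, ← hz k, smul_smul]
    rw [mul_one_div, div_self hs.ne', one_smul]
  -- main one-step inequality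
  have hstep : ∀ k : ℕ, (1 + ρ) * E (k + 1) ≤ E k := by
    intro k
    have hkn : (0:ℝ) ≤ (k:ℝ) := Nat.cast_nonneg k
    have hα1 : (0:ℝ) < α - 1 := by linarith
    have hApos : (0:ℝ) < (k:ℝ) + α - 1 := by linarith
    have hAne : ((k:ℝ) + α - 1) ≠ 0 := hApos.ne'
    have hkα : (0:ℝ) < (k:ℝ) + α := by linarith
    have hzx : z k = x k - s • Gs (x k) := by rw [← hsG k]; abel
    -- w recurrence
    have hwk1 : w (k+1) = w k - (((k:ℝ) + α - 1) * s) • Gs (x k) := by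
      simp only [hwdef]
      push_cast
      rw [hx k, hzx]
      match_scalars <;> field_simp <;> ring
    -- norm expansion
    have hWsq : ‖w (k+1)‖^2 = ‖w k‖^2
        - 2*((((k:ℝ)+α-1))*s)*⟪Gs (x k), w k⟫
        + ((((k:ℝ)+α-1))*s)^2*‖Gs (x k)‖^2 := by
      rw [hwk1, norm_sub_sq_real, real_inner_smul_right, norm_smul, Real.norm_eq_abs,
        abs_of_nonneg (by positivity : (0:ℝ) ≤ ((k:ℝ)+α-1)*s), real_inner_comm]
      ring
    -- the auxiliary point ustar
    set ustar : H := (((k:ℝ))/((k:ℝ)+α-1)) • y k + ((α-1)/((k:ℝ)+α-1)) • xstar with hustar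
    have hAu : ((k:ℝ)+α-1) • (x k - ustar) = w k := by
      simp only [hustar, hwdef]
      match_scalars <;> (field_simp; try ring)
    have hiw : ⟪Gs (x k), w k⟫ = ((k:ℝ)+α-1) * ⟪Gs (x k), x k - ustar⟫ := by
      rw [← hAu, real_inner_smul_right]
    have hnw : ‖w k‖^2 = ((k:ℝ)+α-1)^2 * ‖ustar - x k‖^2 := by
      rw [← hAu, norm_smul, Real.norm_eq_abs, abs_of_pos hApos, norm_sub_rev]
      ring
    -- convexity of F at ustar
    have hFu : F ustar ≤ ((k:ℝ)/((k:ℝ)+α-1)) * F (y k) + ((α-1)/((k:ℝ)+α-1)) * F xstar := by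
      have ha : (0:ℝ) ≤ (k:ℝ)/((k:ℝ)+α-1) := by positivity
      have hb : (0:ℝ) ≤ (α-1)/((k:ℝ)+α-1) := by positivity
      have hab : (k:ℝ)/((k:ℝ)+α-1) + (α-1)/((k:ℝ)+α-1) = 1 := by
        field_simp
        ring
      have hfc := hf.2 (Set.mem_univ (y k)) (Set.mem_univ xstar) ha hb hab
      have hgc := hg.2 (Set.mem_univ (y k)) (Set.mem_univ xstar) ha hb hab
      simp only [smul_eq_mul] at hfc hgc
      have hmul : (0:ℝ) ≤ ((k:ℝ)/((k:ℝ)+α-1)) * ((α-1)/((k:ℝ)+α-1))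
          * (μ/2 * ‖y k - xstar‖^2) := by positivity
      rw [hF _, hF (y k), hF xstar]
      rw [hustar]
      linarith [hfc, hgc, hmul]
    -- key inequality at ustar
    have hKA := mapm_keyA f f' g F L μ s hL hseq hf hdiff hlip hg prox hprox hF
      (x k) (z k) (Gs (x k)) (hz k) (hsG k) ustar
    -- key inequality at xstar
    have hKx := mapm_keyA f f' g F L μ s hL hseq hf hdiff hlip hg prox hprox hF
      (x k) (z k) (Gs (x k)) (hz k) (hsG k) xstar
    -- gradient bound : 2 μ (F z - F*) ≤ ‖G‖²
    have hzG : 2*μ*(F (z k) - F xstar) ≤ ‖Gs (x k)‖^2 := by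
      rw [norm_sub_rev xstar (x k)] at hKx
      have hCS2 : ⟪Gs (x k), x k - xstar⟫ ≤ ‖Gs (x k)‖ * ‖x k - xstar‖ :=
        real_inner_le_norm _ _
      have t1 := mul_le_mul_of_nonneg_left hKx (by positivity : (0:ℝ) ≤ 2*μ)
      have t2 := mul_le_mul_of_nonneg_left hCS2 (by positivity : (0:ℝ) ≤ 2*μ)
      have t3 := sq_nonneg (μ*‖x k - xstar‖ - ‖Gs (x k)‖)
      have t4 : (0:ℝ) ≤ 2*μ*((3*s/4)*‖Gs (x k)‖^2) := by positivity
      nlinarith [t1, t2, t3, t4]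
    -- key scalar inequality
    have h1 : F (z k) - (((k:ℝ)/((k:ℝ)+α-1))*F (y k) + ((α-1)/((k:ℝ)+α-1))*F xstar)
        + (3*s/4)*‖Gs (x k)‖^2 + μ/2*(‖w k‖^2/((k:ℝ)+α-1)^2)
        ≤ ⟪Gs (x k), x k - ustar⟫ := by
      have e : ‖ustar - x k‖^2 = ‖w k‖^2/((k:ℝ)+α-1)^2 := by
        rw [hnw]; field_simp
      rw [e] at hKA
      linarith [hKA, hFu]
    have hkey : s*((k:ℝ)+α-1)^2*(F (z k) - F xstar) - s*((k:ℝ)+α-1)*(k:ℝ)*(F (y k) - F xstar)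
        + (3/4)*s^2*((k:ℝ)+α-1)^2*‖Gs (x k)‖^2 + (s*μ/2)*‖w k‖^2
        ≤ s*((k:ℝ)+α-1)*⟪Gs (x k), w k⟫ := by
      have h2 := mul_le_mul_of_nonneg_left h1
        (by positivity : (0:ℝ) ≤ s*((k:ℝ)+α-1)^2)
      rw [hiw]
      calc s*((k:ℝ)+α-1)^2*(F (z k) - F xstar) - s*((k:ℝ)+α-1)*(k:ℝ)*(F (y k) - F xstar)
          + (3/4)*s^2*((k:ℝ)+α-1)^2*‖Gs (x k)‖^2 + (s*μ/2)*‖w k‖^2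
          = s*((k:ℝ)+α-1)^2*(F (z k) - (((k:ℝ)/((k:ℝ)+α-1))*F (y k)
            + ((α-1)/((k:ℝ)+α-1))*F xstar)
            + (3*s/4)*‖Gs (x k)‖^2 + μ/2*(‖w k‖^2/((k:ℝ)+α-1)^2)) := by
            field_simp
            ring
        _ ≤ s*((k:ℝ)+α-1)^2*⟪Gs (x k), x k - ustar⟫ := h2
        _ = s*((k:ℝ)+α-1)*(((k:ℝ)+α-1)*⟪Gs (x k), x k - ustar⟫) := by ring
    -- Cauchy-Schwarz
    have hCS : -⟪Gs (x k), w k⟫ ≤ ‖Gs (x k)‖ * ‖w k‖ := by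
      have h3 := real_inner_le_norm (-(Gs (x k))) (w k)
      rw [inner_neg_left, norm_neg] at h3
      linarith
    -- monotonicity of F (y ·)
    have hy'z : F (y (k+1)) ≤ F (z k) := by
      rw [hy k]
      split_ifs with hcase
      · exact le_rfl
      · exact (not_le.1 hcase).le
    have hy'0 : 0 ≤ F (y (k+1)) - F xstar := sub_nonneg.2 (hstar _)
    -- (B+1)(A+1) ≤ A²
    have hBA : ((k:ℝ)+1)*(((k:ℝ)+α-1)+1) ≤ ((k:ℝ)+α-1)^2 := by
      nlinarith [mul_nonneg (by linarith : (0:ℝ) ≤ α - 3) hkn]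
    -- multiplied facts
    have m1 : s*(1+ρ)*(F (y (k+1)) - F xstar)*(((k:ℝ)+1)*(((k:ℝ)+α-1)+1))
        ≤ s*(1+ρ)*(F (y (k+1)) - F xstar)*((k:ℝ)+α-1)^2 :=
      mul_le_mul_of_nonneg_left hBA (by positivity)
    have m2 : s*(1+ρ)*((k:ℝ)+α-1)^2*(F (y (k+1)) - F xstar)
        ≤ s*(1+ρ)*((k:ℝ)+α-1)^2*(F (z k) - F xstar) := by
      apply mul_le_mul_of_nonneg_left (by linarith [hy'z]) (by positivity)
    have m4 : ρ*(((k:ℝ)+α-1)*s)*(-⟪Gs (x k), w k⟫)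
        ≤ ρ*(((k:ℝ)+α-1)*s)*(‖Gs (x k)‖ * ‖w k‖) :=
      mul_le_mul_of_nonneg_left hCS (by positivity)
    have mfq := mapm_final_quad s μ ((k:ℝ)+α-1) ‖Gs (x k)‖ ‖w k‖ (F (z k) - F xstar)
      hs hμ hApos.le (norm_nonneg _) (norm_nonneg _) hzG
    rw [← hρq] at mfq
    -- assemble
    simp only [hEdef]
    push_cast
    rw [hWsq]
    linarith [m1, m2, m4, mfq, hkey]
  -- geometric decay by induction
  have hcontract : ∀ k : ℕ, (1 + ρ) ^ k * E k ≤ E 0 := by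
    intro k
    induction k with
    | zero => simp
    | succ n ih =>
        have h1 : (1 + ρ) ^ (n + 1) * E (n + 1) = (1 + ρ) ^ n * ((1 + ρ) * E (n + 1)) := by
          ring
        rw [h1]
        calc (1 + ρ) ^ n * ((1 + ρ) * E (n + 1)) ≤ (1 + ρ) ^ n * E n :=
              mul_le_mul_of_nonneg_left (hstep n) (by positivity)
          _ ≤ E 0 := ih
  -- value of E 0
  have hE0 : E 0 = 1 / 2 * ((α - 1) ^ 2 * ‖x 0 - xstar‖ ^ 2) := by
    have hw0 : w 0 = (α - 1) • (x 0 - xstar) := by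
      rw [hwdef]
      simp only [Nat.cast_zero]
      module
    rw [hEdef]
    simp only [hw0, Nat.cast_zero]
    rw [norm_smul, Real.norm_eq_abs, abs_of_nonneg (by linarith : (0:ℝ) ≤ α - 1)]
    ring
  -- conclusion
  intro k hk
  have hk0 : 0 < ⌈α - 1⌉₊ := Nat.ceil_pos.2 (by linarith)
  have hk1 : 1 ≤ k := le_trans hk0 hk
  have hkR : (1:ℝ) ≤ (k:ℝ) := by exact_mod_cast hk1
  have hkpos : (0:ℝ) < (k:ℝ) := by linarith
  have hα1 : (0:ℝ) < α - 1 := by linarith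
  have hApos : (0:ℝ) < (k:ℝ) + α - 1 := by linarith
  have h1ρ : (0:ℝ) < 1 + ρ := by linarith
  set P : ℝ := (1+ρ)^(k - ⌈α-1⌉₊) with hP
  have hPpos : 0 < P := by positivity
  have hPk : P ≤ (1+ρ)^k := pow_le_pow_right₀ (by linarith) (Nat.sub_le k _)
  have hyk0 : 0 ≤ F (y k) - F xstar := sub_nonneg.2 (hstar _)
  have hEk_lb : s*(k:ℝ)*((k:ℝ)+α-1)*(F (y k) - F xstar) ≤ E k := by
    simp only [hEdef]
    have h2 : (0:ℝ) ≤ 1/2*‖w k‖^2 := by positivity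
    linarith
  have hEk0 : 0 ≤ E k :=
    le_trans (by positivity : (0:ℝ) ≤ s*(k:ℝ)*((k:ℝ)+α-1)*(F (y k) - F xstar)) hEk_lb
  have hchain : E k * P ≤ E 0 := by
    calc E k * P ≤ E k * (1+ρ)^k := mul_le_mul_of_nonneg_left hPk hEk0
      _ = (1+ρ)^k * E k := by ring
      _ ≤ E 0 := hcontract k
  have hfinal : (s*(k:ℝ)*((k:ℝ)+α-1)*(F (y k) - F xstar)) * P
      ≤ 1/2*((α-1)^2*‖x 0 - xstar‖^2) := by
    calc (s*(k:ℝ)*((k:ℝ)+α-1)*(F (y k) - F xstar)) * P ≤ E k * P :=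
          mul_le_mul_of_nonneg_right hEk_lb hPpos.le
      _ ≤ E 0 := hchain
      _ = 1/2*((α-1)^2*‖x 0 - xstar‖^2) := hE0
  have hkne : ((k:ℝ)) ≠ 0 := hkpos.ne'
  have hAne : ((k:ℝ)+α-1) ≠ 0 := hApos.ne'
  have hPne : P ≠ 0 := hPpos.ne'
  have hLne : L ≠ 0 := hL.ne'
  have hgoal_eq : (α-1)^2*L*‖x 0 - xstar‖^2/((k:ℝ)*((k:ℝ)+α-1)) * P⁻¹
      = (1/2*((α-1)^2*‖x 0 - xstar‖^2)) / (s*(k:ℝ)*((k:ℝ)+α-1)*P) := by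
    rw [hseq]
    field_simp
  rw [hgoal_eq, le_div_iff₀ (by positivity)]
  calc (F (y k) - F xstar) * (s*(k:ℝ)*((k:ℝ)+α-1)*P)
      = (s*(k:ℝ)*((k:ℝ)+α-1)*(F (y k) - F xstar))*P := by ring
    _ ≤ 1/2*((α-1)^2*‖x 0 - xstar‖^2) := hfinal
end
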